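/- arXiv:2603.24380 — 3 statements merged into one kernel-verified Lean document; each statement's English description precedes it below -/
import Mathlib

section
/- Interpolation estimates for the time derivatives of the expansion coefficients (Lemma 4.5 of the paper, 'lem_interp_fD_dot_A_1_2', in conditional form): Let α ∈ (0,1), let k ≥ 4 be an integer, and let C₀ > 0. Suppose v : ℝ^d × ℝ → ℝ is smooth and for every t ≥ 1 satisfies (i) sup_{Q_ρ(t)} |v| ≤ C₀ e^{−2t}, (ii) [𝔇²v]_{α,Q_ρ(t)} ≤ C₀ e^{−t}, and (iii) [𝔇^ℓ v]_{α,Q_ρ(t)} ≤ C₀ e^{(ℓ−4)t/2} for every integer 2 ≤ ℓ ≤ 2k+4. Then there exists C > 0 such that for every t ≥ 1: sup_{Q_{ρ′}(t)} |𝔇^ℓ v| ≤ C e^{−(t/2)(4 − 2ℓ/(2+α))} for every integer 0 ≤ ℓ ≤ 2, and sup_{Q_{ρ′}(t)} |𝔇^ℓ v| ≤ C e^{−(t/2)(4 − ℓ²/(ℓ+α))} for every integer 2 ≤ ℓ ≤ 2k+4. -/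
open Real Finset

/-- The `p`-th spatial Fréchet derivative of the `q`-th time derivative of
`u : ℝ^d × ℝ → ℝ` (space is the first variable, time the second). -/
noncomputable def spaceTimeDeriv (d : ℕ) (u : EuclideanSpace ℝ (Fin d) × ℝ → ℝ)
    (p q : ℕ) (x : EuclideanSpace ℝ (Fin d)) (s : ℝ) :
    ContinuousMultilinearMap ℝ (fun _ : Fin p => EuclideanSpace ℝ (Fin d)) ℝ :=
  iteratedFDeriv ℝ p (fun y => iteratedDeriv q (fun τ => u (y, τ)) s) x

/-- `|𝔇^k u (z)| = sqrt (Σ_{p+2q=k} ‖D_x^p ∂_t^q u(z)‖²)`. -/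
noncomputable def frakDNorm (d : ℕ) (u : EuclideanSpace ℝ (Fin d) × ℝ → ℝ)
    (k : ℕ) (z : EuclideanSpace ℝ (Fin d) × ℝ) : ℝ :=
  Real.sqrt (∑ q ∈ Finset.range (k / 2 + 1), ‖spaceTimeDeriv d u (k - 2 * q) q z.1 z.2‖ ^ 2)

/-- The parabolic cylinder `Q_ρ(t) = {(x,s) : |x| ≤ ρ, t-1 ≤ s ≤ t}`. -/
def parabolicCylinder (d : ℕ) (ρ t : ℝ) : Set (EuclideanSpace ℝ (Fin d) × ℝ) :=
  {z | ‖z.1‖ ≤ ρ ∧ t - 1 ≤ z.2 ∧ z.2 ≤ t}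

/-- The parabolic distance `|x-x'| + |s-s'|^{1/2}`. -/
noncomputable def parabolicDist (d : ℕ) (z w : EuclideanSpace ℝ (Fin d) × ℝ) : ℝ :=
  ‖z.1 - w.1‖ + |z.2 - w.2| ^ ((1 : ℝ) / 2)

/-- `[𝔇^k u]_{α,Q} ≤ B`: the sum over the components `D_x^{k-2q} ∂_t^q u` of their
parabolic `α`-Hölder seminorms over `Q` is at most `B`. -/
def frakDHolderLE (d : ℕ) (u : EuclideanSpace ℝ (Fin d) × ℝ → ℝ) (k : ℕ) (α : ℝ)
    (Q : Set (EuclideanSpace ℝ (Fin d) × ℝ)) (B : ℝ) : Prop :=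
  ∃ M : ℕ → ℝ, (∀ q, 0 ≤ M q) ∧ (∑ q ∈ Finset.range (k / 2 + 1), M q) ≤ B ∧
    ∀ q ∈ Finset.range (k / 2 + 1), ∀ z ∈ Q, ∀ w ∈ Q,
      ‖spaceTimeDeriv d u (k - 2 * q) q z.1 z.2 - spaceTimeDeriv d u (k - 2 * q) q w.1 w.2‖
        ≤ M q * parabolicDist d z w ^ α

section AbstractHelpers
variable {E : Type*} [NormedAddCommGroup E] [NormedSpace ℝ E]
variable {X : Type*} [NormedAddCommGroup X] [NormedSpace ℝ X]

/-- MVT with arbitrary center. -/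
lemma mvt_center (ψ : ℝ → E) (hψ : Differentiable ℝ ψ) (a b K : ℝ) (c : E)
    (hab : a ≤ b) (hK : ∀ τ ∈ Set.Icc a b, ‖deriv ψ τ - c‖ ≤ K) :
    ‖ψ b - ψ a - (b - a) • c‖ ≤ K * (b - a) := by
  have hder : ∀ τ ∈ Set.Icc a b, HasDerivWithinAt (fun σ => ψ σ - σ • c)
      (deriv ψ τ - c) (Set.Icc a b) τ := by
    intro τ hτ
    have h1 : HasDerivAt ψ (deriv ψ τ) τ := (hψ τ).hasDerivAt
    have h2 : HasDerivAt (fun σ : ℝ => σ • c) c τ := by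
      simpa using (hasDerivAt_id τ).smul_const c
    exact (h1.sub h2).hasDerivWithinAt
  have := norm_image_sub_le_of_norm_deriv_le_segment' hder
    (fun τ hτ => hK τ (Set.Ico_subset_Icc_self hτ)) b (Set.right_mem_Icc.2 hab)
  have heq : ψ b - b • c - (ψ a - a • c) = ψ b - ψ a - (b - a) • c := by
    rw [sub_smul]; abel
  rwa [heq] at this

/-- Step estimate: derivative value bound from sup + oscillation. -/
lemma step_est (ψ : ℝ → E) (hψ : Differentiable ℝ ψ) (a b S K : ℝ) (c : E)
    (hab : a < b)
    (hS : ∀ τ ∈ Set.Icc a b, ‖ψ τ‖ ≤ S)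
    (hK : ∀ τ ∈ Set.Icc a b, ‖deriv ψ τ - c‖ ≤ K) :
    ‖c‖ ≤ 2 * S / (b - a) + K := by
  have h1 := mvt_center ψ hψ a b K c hab.le hK
  have h2 : ‖(b - a) • c‖ ≤ 2 * S + K * (b - a) := by
    have : (b - a) • c = (ψ b - ψ a) - (ψ b - ψ a - (b - a) • c) := by abel
    rw [this]
    calc ‖(ψ b - ψ a) - (ψ b - ψ a - (b - a) • c)‖
        ≤ ‖ψ b - ψ a‖ + ‖ψ b - ψ a - (b - a) • c‖ := norm_sub_le _ _
      _ ≤ (‖ψ b‖ + ‖ψ a‖) + K * (b - a) := by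
          gcongr; exact norm_sub_le _ _
      _ ≤ (S + S) + K * (b - a) := by
          gcongr
          · exact hS b (Set.right_mem_Icc.2 hab.le)
          · exact hS a (Set.left_mem_Icc.2 hab.le)
      _ = 2 * S + K * (b - a) := by ring
  have hba : 0 < b - a := by linarith
  rw [norm_smul, Real.norm_eq_abs, abs_of_pos hba] at h2
  have h3 : ‖c‖ ≤ (2 * S + K * (b - a)) / (b - a) := by
    rw [le_div_iff₀ hba]; linarith
  calc ‖c‖ ≤ (2 * S + K * (b - a)) / (b - a) := h3
    _ = 2 * S / (b - a) + K := by field_simp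

/-- Landau-type estimate: first derivative at left endpoint from sup of `ψ` on `[0,2h]` and
Hölder-type control of the second derivative. -/
lemma landau_est (ψ : ℝ → E) (hψ : Differentiable ℝ ψ) (hψ' : Differentiable ℝ (deriv ψ))
    (h S K : ℝ) (hh : 0 < h)
    (hS : ∀ τ ∈ Set.Icc (0:ℝ) (2*h), ‖ψ τ‖ ≤ S)
    (hK0 : 0 ≤ K)
    (hK : ∀ τ ∈ Set.Icc (0:ℝ) (2*h), ‖deriv (deriv ψ) τ - deriv (deriv ψ) 0‖ ≤ K) :
    ‖deriv ψ 0‖ ≤ 6 * S / h + 2 * K * h := by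
  set c2 := deriv (deriv ψ) 0 with hc2
  have d1 : ∀ a b : ℝ, 0 ≤ a → a ≤ b → b ≤ 2*h →
      ‖deriv ψ b - deriv ψ a - (b - a) • c2‖ ≤ K * (b - a) := by
    intro a b ha hab hb
    exact mvt_center (deriv ψ) hψ' a b K c2 hab
      (fun τ hτ => hK τ ⟨le_trans ha hτ.1, le_trans hτ.2 hb⟩)
  have hc2bound : ‖c2‖ ≤ 4 * S / h ^ 2 + K := by
    set χ : ℝ → E := fun τ => ψ (τ + h) - ψ τ with hχ
    have hχd : Differentiable ℝ χ := by
      exact ((hψ.comp (differentiable_id.add_const h))).sub hψ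
    have hχderiv : ∀ τ, deriv χ τ = deriv ψ (τ + h) - deriv ψ τ := by
      intro τ
      have e1 : HasDerivAt (fun σ : ℝ => ψ (σ + h)) (deriv ψ (τ + h)) τ := by
        simpa [Function.comp_def] using (HasDerivAt.scomp (x := τ) (hψ (τ+h)).hasDerivAt
          ((hasDerivAt_id τ).add_const h))
      exact ((e1.sub (hψ τ).hasDerivAt)).deriv
    have hKχ : ∀ τ ∈ Set.Icc (0:ℝ) h, ‖deriv χ τ - h • c2‖ ≤ K * h := by
      intro τ hτ
      rw [hχderiv τ]
      have := d1 τ (τ + h) hτ.1 (by linarith) (by rcases hτ with ⟨h1, h2⟩; linarith)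
      simpa using this
    have := mvt_center χ hχd 0 h (K * h) (h • c2) hh.le hKχ
    have hnorm : ‖(h - 0) • h • c2‖ ≥ h^2 * ‖c2‖ := by
      rw [sub_zero, norm_smul, norm_smul, Real.norm_eq_abs, abs_of_pos hh]
      ring_nf; exact le_refl _
    have hχb : ∀ τ ∈ Set.Icc (0:ℝ) h, ‖χ τ‖ ≤ 2 * S := by
      intro τ hτ
      calc ‖ψ (τ + h) - ψ τ‖ ≤ ‖ψ (τ+h)‖ + ‖ψ τ‖ := norm_sub_le _ _
        _ ≤ S + S := by
            gcongr
            · exact hS _ ⟨by linarith [hτ.1], by linarith [hτ.2]⟩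
            · exact hS _ ⟨hτ.1, by linarith [hτ.2]⟩
        _ = 2 * S := by ring
    have hfin : h^2 * ‖c2‖ ≤ 4 * S + K * h * h := by
      have h0 : (0:ℝ) ∈ Set.Icc (0:ℝ) h := Set.left_mem_Icc.2 hh.le
      have hh' : h ∈ Set.Icc (0:ℝ) h := Set.right_mem_Icc.2 hh.le
      calc h^2 * ‖c2‖ ≤ ‖(h - 0) • h • c2‖ := hnorm
        _ = ‖(χ h - χ 0) - (χ h - χ 0 - (h - 0) • h • c2)‖ := by congr 1; abel
        _ ≤ ‖χ h - χ 0‖ + ‖χ h - χ 0 - (h - 0) • h • c2‖ := norm_sub_le _ _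
        _ ≤ (‖χ h‖ + ‖χ 0‖) + K * h * (h - 0) := by gcongr; exact norm_sub_le _ _
        _ ≤ (2*S + 2*S) + K * h * h := by
            have e0 := hχb 0 h0
            have e1 := hχb h hh'
            have : K * h * (h - 0) = K * h * h := by ring
            rw [this]
            gcongr
        _ = 4 * S + K * h * h := by ring
    have hh2 : (0:ℝ) < h^2 := by positivity
    have h3 : ‖c2‖ ≤ (4 * S + K * h * h) / h ^ 2 := by
      rw [le_div_iff₀ hh2]; linarith
    calc ‖c2‖ ≤ (4 * S + K * h * h) / h ^ 2 := h3
      _ = 4 * S / h ^ 2 + K := by field_simp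
  have hK2 : ∀ τ ∈ Set.Icc (0:ℝ) h, ‖deriv ψ τ - deriv ψ 0‖ ≤ (‖c2‖ + K) * h := by
    intro τ hτ
    have := d1 0 τ le_rfl hτ.1 (by linarith [hτ.2])
    calc ‖deriv ψ τ - deriv ψ 0‖
        = ‖(deriv ψ τ - deriv ψ 0 - (τ - 0) • c2) + (τ - 0) • c2‖ := by congr 1; abel
      _ ≤ ‖deriv ψ τ - deriv ψ 0 - (τ - 0) • c2‖ + ‖(τ - 0) • c2‖ := norm_add_le _ _
      _ ≤ K * (τ - 0) + |τ - 0| * ‖c2‖ := by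
          refine add_le_add this ?_
          rw [norm_smul, Real.norm_eq_abs]
      _ ≤ K * h + h * ‖c2‖ := by
          rcases hτ with ⟨h1, h2⟩
          rw [sub_zero, abs_of_nonneg h1]
          have := norm_nonneg c2
          refine add_le_add ?_ ?_
          · nlinarith
          · nlinarith
      _ = (‖c2‖ + K) * h := by ring
  have hstep := step_est ψ hψ 0 h S ((‖c2‖ + K) * h) (deriv ψ 0) hh
    (fun τ hτ => hS τ ⟨hτ.1, by linarith [hτ.2]⟩)
    (fun τ hτ => hK2 τ hτ)
  rw [sub_zero] at hstep
  calc ‖deriv ψ 0‖ ≤ 2 * S / h + (‖c2‖ + K) * h := hstep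
    _ ≤ 2 * S / h + ((4 * S / h^2 + K) + K) * h := by
        gcongr
    _ = 6 * S / h + 2 * K * h := by field_simp; ring

lemma clm_norm_le_of_unit (T : X →L[ℝ] E) {B : ℝ} (hB : 0 ≤ B)
    (h : ∀ e : X, ‖e‖ = 1 → ‖T e‖ ≤ B) : ‖T‖ ≤ B := by
  refine T.opNorm_le_bound hB (fun v => ?_)
  by_cases hv : v = 0
  · simp [hv]
  · have he : ‖(‖v‖⁻¹ : ℝ) • v‖ = 1 := norm_smul_inv_norm hv
    have := h _ he
    rw [map_smul, norm_smul, norm_inv, norm_norm] at this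
    have hv0 : 0 < ‖v‖ := norm_pos_iff.2 hv
    calc ‖T v‖ = (‖v‖⁻¹ * ‖T v‖) * ‖v‖ := by field_simp
      _ ≤ B * ‖v‖ := by gcongr

lemma hasDerivAt_line (G : X → E) (hG : Differentiable ℝ G) (x e : X) (τ : ℝ) :
    HasDerivAt (fun σ : ℝ => G (x + σ • e)) (fderiv ℝ G (x + τ • e) e) τ := by
  have h1 : HasDerivAt (fun σ : ℝ => x + σ • e) e τ := by
    simpa using ((hasDerivAt_id τ).smul_const e).const_add x
  exact (hG (x + τ • e)).hasFDerivAt.comp_hasDerivAt τ h1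

lemma hasDerivAt_line2 (G : X → E) (hG : Differentiable ℝ (fderiv ℝ G)) (x e : X) (τ : ℝ) :
    HasDerivAt (fun σ : ℝ => fderiv ℝ G (x + σ • e) e)
      (fderiv ℝ (fderiv ℝ G) (x + τ • e) e e) τ := by
  have h1 := hasDerivAt_line (fderiv ℝ G) hG x e τ
  have h2 := ((ContinuousLinearMap.apply ℝ E e).hasFDerivAt
    (x := fderiv ℝ G (x + τ • e))).comp_hasDerivAt τ h1
  simpa [Function.comp_def] using h2

/-- Transfer: norm of `(n+1)`-st iterated derivative from the bundled `fderiv` of the `n`-th. -/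
lemma norm_iFD_succ_le (f : X → E) (n : ℕ) (x : X) {B : ℝ} (hB : 0 ≤ B)
    (h : ‖fderiv ℝ (iteratedFDeriv ℝ n f) x‖ ≤ B) :
    ‖iteratedFDeriv ℝ (n + 1) f x‖ ≤ B := by
  refine ContinuousMultilinearMap.opNorm_le_bound hB (fun m => ?_)
  rw [iteratedFDeriv_succ_apply_left]
  calc ‖fderiv ℝ (iteratedFDeriv ℝ n f) x (m 0) (Fin.tail m)‖
      ≤ ‖fderiv ℝ (iteratedFDeriv ℝ n f) x (m 0)‖ * ∏ i : Fin n, ‖Fin.tail m i‖ :=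
        ContinuousMultilinearMap.le_opNorm _ _
    _ ≤ (B * ‖m 0‖) * ∏ i : Fin n, ‖Fin.tail m i‖ := by
        refine mul_le_mul_of_nonneg_right ?_ (Finset.prod_nonneg (fun i _ => norm_nonneg _))
        exact le_trans (ContinuousLinearMap.le_opNorm _ _)
          (mul_le_mul_of_nonneg_right h (norm_nonneg _))
    _ = B * ∏ i : Fin (n + 1), ‖m i‖ := by
        rw [Fin.prod_univ_succ]; ring_nf; rfl

/-- Transfer: applied-difference of the bundled derivative bounded by the difference
of iterated derivatives. -/
lemma fderiv_iFD_apply_sub_le (f : X → E) (n : ℕ) (x y : X) (e : X) :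
    ‖fderiv ℝ (iteratedFDeriv ℝ n f) y e - fderiv ℝ (iteratedFDeriv ℝ n f) x e‖ ≤
      ‖iteratedFDeriv ℝ (n + 1) f y - iteratedFDeriv ℝ (n + 1) f x‖ * ‖e‖ := by
  refine ContinuousMultilinearMap.opNorm_le_bound (by positivity) (fun m => ?_)
  have key : (fderiv ℝ (iteratedFDeriv ℝ n f) y e - fderiv ℝ (iteratedFDeriv ℝ n f) x e) m
      = (iteratedFDeriv ℝ (n + 1) f y - iteratedFDeriv ℝ (n + 1) f x) (Fin.cons e m) := by
    simp only [ContinuousMultilinearMap.sub_apply]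
    rw [iteratedFDeriv_succ_apply_left, iteratedFDeriv_succ_apply_left,
      Fin.cons_zero, Fin.tail_cons]
  rw [key]
  calc ‖(iteratedFDeriv ℝ (n + 1) f y - iteratedFDeriv ℝ (n + 1) f x) (Fin.cons e m)‖
      ≤ ‖iteratedFDeriv ℝ (n + 1) f y - iteratedFDeriv ℝ (n + 1) f x‖ *
          ∏ i : Fin (n + 1), ‖Fin.cons (α := fun _ => X) e m i‖ :=
        ContinuousMultilinearMap.le_opNorm _ _
    _ = ‖iteratedFDeriv ℝ (n + 1) f y - iteratedFDeriv ℝ (n + 1) f x‖ * ‖e‖ *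
          ∏ i : Fin n, ‖m i‖ := by
        rw [Fin.prod_univ_succ]; simp [mul_assoc]
    _ = _ := by ring

lemma norm_iFD_one_le (G : X → E) (x : X) {B : ℝ} (hB : 0 ≤ B)
    (h : ∀ e : X, ‖e‖ = 1 → ‖fderiv ℝ G x e‖ ≤ B) :
    ‖iteratedFDeriv ℝ 1 G x‖ ≤ B := by
  refine ContinuousMultilinearMap.opNorm_le_bound hB (fun m => ?_)
  rw [iteratedFDeriv_one_apply]
  calc ‖fderiv ℝ G x (m 0)‖ ≤ B * ‖m 0‖ :=
        le_trans (ContinuousLinearMap.le_opNorm _ _)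
          (by gcongr; exact clm_norm_le_of_unit _ hB h)
    _ = B * ∏ i : Fin 1, ‖m i‖ := by simp

/-- Difference of values of 0-th iterated derivatives of two functions. -/
lemma apply0_sub_le (A B : ContinuousMultilinearMap ℝ (fun _ : Fin 0 => X) E) :
    ‖A (fun _ => 0) - B (fun _ => 0)‖ ≤ ‖A - B‖ := by
  have : A (fun _ => 0) - B (fun _ => 0) = (A - B) (fun _ => 0) := by
    simp [ContinuousMultilinearMap.sub_apply]
  rw [this]
  calc ‖(A - B) (fun _ => (0:X))‖ ≤ ‖A - B‖ * ∏ i : Fin 0, ‖(0:X)‖ :=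
        ContinuousMultilinearMap.le_opNorm _ _
    _ = ‖A - B‖ := by simp

/-- Second-derivative diagonal difference controlled by the 2nd iterated derivative. -/
lemma snd_deriv_apply_sub_le (f : X → E) (x y e : X) (he : ‖e‖ = 1) :
    ‖fderiv ℝ (fderiv ℝ f) y e e - fderiv ℝ (fderiv ℝ f) x e e‖ ≤
      ‖iteratedFDeriv ℝ 2 f y - iteratedFDeriv ℝ 2 f x‖ := by
  have h1 : fderiv ℝ (fderiv ℝ f) y e e = iteratedFDeriv ℝ 2 f y ![e, e] := by
    rw [iteratedFDeriv_two_apply]; simp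
  have h2 : fderiv ℝ (fderiv ℝ f) x e e = iteratedFDeriv ℝ 2 f x ![e, e] := by
    rw [iteratedFDeriv_two_apply]; simp
  rw [h1, h2]
  have : iteratedFDeriv ℝ 2 f y ![e, e] - iteratedFDeriv ℝ 2 f x ![e, e]
      = (iteratedFDeriv ℝ 2 f y - iteratedFDeriv ℝ 2 f x) ![e, e] := by
    simp [ContinuousMultilinearMap.sub_apply]
  rw [this]
  calc ‖(iteratedFDeriv ℝ 2 f y - iteratedFDeriv ℝ 2 f x) ![e, e]‖
      ≤ ‖iteratedFDeriv ℝ 2 f y - iteratedFDeriv ℝ 2 f x‖ *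
        ∏ i : Fin 2, ‖(![e, e] : Fin 2 → X) i‖ := ContinuousMultilinearMap.le_opNorm _ _
    _ = ‖iteratedFDeriv ℝ 2 f y - iteratedFDeriv ℝ 2 f x‖ := by
        rw [Fin.prod_univ_two]; simp [he]

end AbstractHelpers

lemma contDiff_timeDeriv {d : ℕ} (u : EuclideanSpace ℝ (Fin d) × ℝ → ℝ)
    (hu : ContDiff ℝ (⊤ : ℕ∞) u) (q : ℕ) :
    ContDiff ℝ (⊤ : ℕ∞) (fun z : EuclideanSpace ℝ (Fin d) × ℝ =>
      iteratedDeriv q (fun τ => u (z.1, τ)) z.2) := by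
  induction q with
  | zero =>
    simp only [iteratedDeriv_zero]
    exact hu.comp (contDiff_fst.prodMk contDiff_snd)
  | succ q IH =>
    have hrw : (fun z : EuclideanSpace ℝ (Fin d) × ℝ =>
        iteratedDeriv (q + 1) (fun τ => u (z.1, τ)) z.2) =
        (fun z : EuclideanSpace ℝ (Fin d) × ℝ =>
          fderiv ℝ (fun τ => iteratedDeriv q (fun τ' => u (z.1, τ')) τ) z.2 1) := by
      funext z
      rw [iteratedDeriv_succ]
      rw [← fderiv_apply_one_eq_deriv]
    rw [hrw]
    refine ContDiff.fderiv_apply (m := (⊤ : ℕ∞))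
      (f := fun (z : EuclideanSpace ℝ (Fin d) × ℝ) (τ : ℝ) =>
      iteratedDeriv q (fun τ' => u (z.1, τ')) τ) ?_ contDiff_snd contDiff_const ?_
    · exact IH.comp ((contDiff_fst.comp contDiff_fst).prodMk contDiff_snd)
    · norm_cast

/-- The decay rate for `𝔇^ℓ`. -/
noncomputable def Rfun (α : ℝ) (ℓ : ℕ) : ℝ :=
  if ℓ = 1 then -2 + 1 / (2 + α) else -2 + (ℓ:ℝ)^2 / (2 * ((ℓ:ℝ) + α))

section Rates
variable {α : ℝ} (hα0 : 0 < α) (hα1 : α < 1)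
include hα0

lemma gfun_mono {x y : ℝ} (hx : 0 ≤ x) (hxy : x ≤ y) :
    x^2 / (2*(x+α)) ≤ y^2 / (2*(y+α)) := by
  have hy : 0 ≤ y := le_trans hx hxy
  rw [div_le_div_iff₀ (by linarith) (by linarith)]
  nlinarith [mul_nonneg (mul_nonneg hx hy) (sub_nonneg.2 hxy),
    mul_nonneg (mul_nonneg hα0.le (sub_nonneg.2 hxy)) (by linarith : (0:ℝ) ≤ y + x)]

lemma Rfun_zero : Rfun α 0 = -2 := by unfold Rfun; norm_num

lemma Rfun_one : Rfun α 1 = -2 + 1/(2+α) := by unfold Rfun; norm_num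

lemma Rfun_two : Rfun α 2 = -2 + 4/(2*(2+α)) := by unfold Rfun; norm_num

lemma Rfun_step_le (ℓ : ℕ) : Rfun α ℓ ≤ Rfun α (ℓ+1) := by
  match ℓ with
  | 0 =>
    rw [Rfun_zero hα0, Rfun_one hα0]
    have h2 : (0:ℝ) < 2 + α := by linarith
    have : 0 < 1/(2+α) := by positivity
    linarith
  | 1 =>
    rw [Rfun_one hα0, Rfun_two hα0]
    have h2 : (0:ℝ) < 2 + α := by linarith
    have : 1/(2+α) ≤ 4/(2*(2+α)) := by
      rw [div_le_div_iff₀ (by linarith) (by positivity)]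
      nlinarith
    linarith
  | (n+2) =>
    unfold Rfun
    rw [if_neg (by omega), if_neg (by omega)]
    have := gfun_mono (α := α) hα0 (x := ((n:ℝ)+2)) (y := ((n:ℝ)+2+1)) (by positivity)
      (by linarith)
    push_cast
    linarith

lemma Rfun_le_of_le {m ℓ : ℕ} (h : m ≤ ℓ) : Rfun α m ≤ Rfun α ℓ := by
  induction ℓ with
  | zero => simp_all
  | succ n IH =>
    rcases Nat.lt_or_ge m (n+1) with h' | h'
    · exact le_trans (IH (by omega)) (Rfun_step_le hα0 n)
    · have : m = n + 1 := by omega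
      subst this; rfl

include hα1

lemma rate_spatial2 : -1 - α * (Rfun α 2 - Rfun α 1) ≤ Rfun α 2 := by
  rw [Rfun_two hα0, Rfun_one hα0]
  have h2 : (0:ℝ) < 2 + α := by linarith
  have key : (-2 + 4/(2*(2+α))) - (-1 - α * ((-2 + 4/(2*(2+α))) - (-2 + 1/(2+α)))) = 0 := by
    field_simp
    ring
  linarith [key]

lemma rate_spatial {x : ℝ} (hx : 3 ≤ x) :
    (x - 4)/2 - α * ((-2 + x^2/(2*(x+α))) - (-2 + (x-1)^2/(2*(x-1+α))))
      ≤ -2 + x^2/(2*(x+α)) := by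
  have hD1 : (0:ℝ) < x + α := by linarith
  have hD2 : (0:ℝ) < x - 1 + α := by linarith
  have key : (-2 + x^2/(2*(x+α))) -
      ((x - 4)/2 - α * ((-2 + x^2/(2*(x+α))) - (-2 + (x-1)^2/(2*(x-1+α)))))
      = α^2 * (x-1) / (2*(x+α)*(x-1+α)) := by
    field_simp
    ring
  have hpos : 0 ≤ α^2 * (x-1) / (2*(x+α)*(x-1+α)) :=
    div_nonneg (mul_nonneg (sq_nonneg α) (by linarith)) (by nlinarith)
  linarith [key]

lemma rate_time {x : ℝ} (hx : 2 ≤ x) :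
    (x - 4)/2 - (α/2) * ((-2 + x^2/(2*(x+α))) - (-2 + (x-2)^2/(2*(x-2+α))))
      ≤ -2 + x^2/(2*(x+α)) := by
  have hD1 : (0:ℝ) < x + α := by linarith
  have hD2 : (0:ℝ) < x - 2 + α := by linarith
  have key : (-2 + x^2/(2*(x+α))) -
      ((x - 4)/2 - (α/2) * ((-2 + x^2/(2*(x+α))) - (-2 + (x-2)^2/(2*(x-2+α)))))
      = α^2 * (x-2) / (2*(x+α)*(x-2+α)) := by
    field_simp
    ring
  have hpos : 0 ≤ α^2 * (x-2) / (2*(x+α)*(x-2+α)) :=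
    div_nonneg (mul_nonneg (sq_nonneg α) (by linarith)) (by nlinarith)
  linarith [key]

lemma rate_l1 : -1 - (1+α) * (Rfun α 1 - Rfun α 0) ≤ Rfun α 1 := by
  rw [Rfun_one hα0, Rfun_zero hα0]
  have h2 : (0:ℝ) < 2 + α := by linarith
  have key : (-2 + 1/(2+α)) - (-1 - (1+α) * ((-2 + 1/(2+α)) - (-2:ℝ))) = 0 := by
    field_simp; ring
  linarith [key]

end Rates


section Engines
variable {d : ℕ} (u : EuclideanSpace ℝ (Fin d) × ℝ → ℝ)

lemma timeFun_contDiff (hu : ContDiff ℝ (⊤ : ℕ∞) u) (q : ℕ) (s : ℝ) :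
    ContDiff ℝ (⊤ : ℕ∞) (fun y : EuclideanSpace ℝ (Fin d) =>
      iteratedDeriv q (fun τ => u (y, τ)) s) :=
  (contDiff_timeDeriv u hu q).comp (contDiff_id.prodMk contDiff_const)

lemma spatial_engine (hu : ContDiff ℝ (⊤ : ℕ∞) u) (q m : ℕ) (x : EuclideanSpace ℝ (Fin d)) (s : ℝ) (h S K : ℝ)
    (hh : 0 < h)
    (hS : ∀ y, ‖y - x‖ ≤ h → ‖spaceTimeDeriv d u m q y s‖ ≤ S)
    (hK : ∀ y, ‖y - x‖ ≤ h →
      ‖spaceTimeDeriv d u (m+1) q y s - spaceTimeDeriv d u (m+1) q x s‖ ≤ K) :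
    ‖spaceTimeDeriv d u (m+1) q x s‖ ≤ 2 * S / h + K := by
  have hS0 : 0 ≤ S := le_trans (norm_nonneg _) (hS x (by simp [hh.le]))
  have hK0 : 0 ≤ K := le_trans (norm_nonneg _) (hK x (by simp [hh.le]))
  have hB0 : 0 ≤ 2 * S / h + K := by positivity
  set F : EuclideanSpace ℝ (Fin d) → ℝ :=
    fun y => iteratedDeriv q (fun τ => u (y, τ)) s with hF
  have hFsmooth : ContDiff ℝ (⊤ : ℕ∞) F := timeFun_contDiff u hu q s
  have hGdiff : Differentiable ℝ (iteratedFDeriv ℝ m F) :=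
    hFsmooth.differentiable_iteratedFDeriv
      (by exact_mod_cast lt_top_iff_ne_top.2 (by simp))
  have unit : ∀ e : EuclideanSpace ℝ (Fin d), ‖e‖ = 1 →
      ‖fderiv ℝ (iteratedFDeriv ℝ m F) x e‖ ≤ 2 * S / h + K := by
    intro e he
    have hmem : ∀ τ : ℝ, τ ∈ Set.Icc (0:ℝ) h → ‖(x + τ • e) - x‖ ≤ h := by
      intro τ hτ
      rw [add_sub_cancel_left, norm_smul, he, mul_one, Real.norm_eq_abs,
        abs_of_nonneg hτ.1]
      exact hτ.2
    have hψ : Differentiable ℝ (fun σ : ℝ => iteratedFDeriv ℝ m F (x + σ • e)) :=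
      hGdiff.comp ((differentiable_id.smul_const e).const_add x)
    have hst := step_est _ hψ 0 h S K (fderiv ℝ (iteratedFDeriv ℝ m F) x e) hh ?_ ?_
    · rwa [sub_zero] at hst
    · intro τ hτ
      exact hS _ (hmem τ hτ)
    · intro τ hτ
      rw [(hasDerivAt_line (iteratedFDeriv ℝ m F) hGdiff x e τ).deriv]
      calc ‖fderiv ℝ (iteratedFDeriv ℝ m F) (x + τ • e) e -
              fderiv ℝ (iteratedFDeriv ℝ m F) x e‖
          ≤ ‖iteratedFDeriv ℝ (m+1) F (x + τ • e) - iteratedFDeriv ℝ (m+1) F x‖ * ‖e‖ :=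
            fderiv_iFD_apply_sub_le F m x (x + τ • e) e
        _ = ‖spaceTimeDeriv d u (m+1) q (x + τ • e) s - spaceTimeDeriv d u (m+1) q x s‖ := by
            rw [he, mul_one]; rfl
        _ ≤ K := hK _ (hmem τ hτ)
  exact norm_iFD_succ_le F m x hB0 (clm_norm_le_of_unit _ hB0 unit)

lemma time_engine (hu : ContDiff ℝ (⊤ : ℕ∞) u) (m : ℕ) (x : EuclideanSpace ℝ (Fin d)) (s t h S K : ℝ)
    (hh : 0 < h) (hh2 : h ≤ 1/2) (hs1 : t - 1 ≤ s) (hs2 : s ≤ t)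
    (hS : ∀ σ, t - 1 ≤ σ → σ ≤ t → ‖spaceTimeDeriv d u 0 m x σ‖ ≤ S)
    (hK : ∀ σ, t - 1 ≤ σ → σ ≤ t → |σ - s| ≤ h →
      ‖spaceTimeDeriv d u 0 (m+1) x σ - spaceTimeDeriv d u 0 (m+1) x s‖ ≤ K) :
    ‖spaceTimeDeriv d u 0 (m+1) x s‖ ≤ 2 * S / h + K := by
  set g : ℝ → ℝ := fun τ => u (x, τ) with hg
  have hψ : Differentiable ℝ (iteratedDeriv m g) := by
    have h' : ContDiff ℝ (⊤ : ℕ∞) (fun σ : ℝ => iteratedDeriv m (fun τ => u (x, τ)) σ) :=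
      (contDiff_timeDeriv u hu m).comp (contDiff_const.prodMk contDiff_id)
    exact h'.differentiable (by simp)
  have hval : ∀ (j : ℕ) (σ : ℝ), ‖spaceTimeDeriv d u 0 j x σ‖ = |iteratedDeriv j g σ| :=
    fun j σ => norm_iteratedFDeriv_zero
  have hsub : ∀ σ σ' : ℝ, |iteratedDeriv (m+1) g σ - iteratedDeriv (m+1) g σ'| ≤
      ‖spaceTimeDeriv d u 0 (m+1) x σ - spaceTimeDeriv d u 0 (m+1) x σ'‖ := by
    intro σ σ'
    have hA : spaceTimeDeriv d u 0 (m+1) x σ (fun _ => 0) = iteratedDeriv (m+1) g σ := by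
      exact iteratedFDeriv_zero_apply _
    have hB : spaceTimeDeriv d u 0 (m+1) x σ' (fun _ => 0) = iteratedDeriv (m+1) g σ' := by
      exact iteratedFDeriv_zero_apply _
    have := apply0_sub_le (spaceTimeDeriv d u 0 (m+1) x σ) (spaceTimeDeriv d u 0 (m+1) x σ')
    rw [hA, hB] at this
    exact this
  have hderiv : ∀ σ, deriv (iteratedDeriv m g) σ = iteratedDeriv (m+1) g σ := by
    intro σ; rw [iteratedDeriv_succ]
  have hfin : ‖deriv (iteratedDeriv m g) s‖ ≤ 2 * S / h + K := by
    by_cases hdir : s + h ≤ t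
    · have := step_est (iteratedDeriv m g) hψ s (s+h) S K (deriv (iteratedDeriv m g) s)
        (by linarith) ?_ ?_
      · rwa [add_sub_cancel_left] at this
      · intro τ hτ
        rw [Real.norm_eq_abs, ← hval m τ]
        exact hS τ (by linarith [hτ.1]) (by linarith [hτ.2])
      · intro τ hτ
        rw [hderiv, hderiv, Real.norm_eq_abs]
        refine le_trans (hsub τ s) (hK τ (by linarith [hτ.1]) (by linarith [hτ.2]) ?_)
        rw [abs_of_nonneg (by linarith [hτ.1])]
        linarith [hτ.2]
    · push_neg at hdir
      have := step_est (iteratedDeriv m g) hψ (s-h) s S K (deriv (iteratedDeriv m g) s)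
        (by linarith) ?_ ?_
      · rwa [sub_sub_cancel] at this
      · intro τ hτ
        rw [Real.norm_eq_abs, ← hval m τ]
        exact hS τ (by linarith [hτ.1]) (by linarith [hτ.2])
      · intro τ hτ
        rw [hderiv, hderiv, Real.norm_eq_abs]
        refine le_trans (hsub τ s) (hK τ (by linarith [hτ.1]) (by linarith [hτ.2]) ?_)
        rw [abs_of_nonpos (by linarith [hτ.2])]
        linarith [hτ.1]
  rw [hval (m+1) s, ← hderiv s]
  exact hfin

lemma ell1_engine (hu : ContDiff ℝ (⊤ : ℕ∞) u) (x : EuclideanSpace ℝ (Fin d)) (s : ℝ) (h S K : ℝ)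
    (hh : 0 < h) (hK0 : 0 ≤ K)
    (hS : ∀ y, ‖y - x‖ ≤ 2*h → |u (y, s)| ≤ S)
    (hK : ∀ y, ‖y - x‖ ≤ 2*h →
      ‖spaceTimeDeriv d u 2 0 y s - spaceTimeDeriv d u 2 0 x s‖ ≤ K) :
    ‖spaceTimeDeriv d u 1 0 x s‖ ≤ 6 * S / h + 4 * K * h := by
  have hS0 : 0 ≤ S := le_trans (abs_nonneg _) (hS x (by simp; positivity))
  have hB0 : 0 ≤ 6 * S / h + 4 * K * h := by positivity
  set F : EuclideanSpace ℝ (Fin d) → ℝ :=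
    fun y => iteratedDeriv 0 (fun τ => u (y, τ)) s with hFdef
  have hFu : ∀ y, F y = u (y, s) := by intro y; rw [hFdef]; simp [iteratedDeriv_zero]
  have hFsmooth : ContDiff ℝ (⊤ : ℕ∞) F := timeFun_contDiff u hu 0 s
  have hFdiff : Differentiable ℝ F := hFsmooth.differentiable (by simp)
  have hF' : Differentiable ℝ (fderiv ℝ F) :=
    (hFsmooth.fderiv_right (m := (⊤ : ℕ∞)) (by norm_cast)).differentiable
      (by simp)
  have unit : ∀ e : EuclideanSpace ℝ (Fin d), ‖e‖ = 1 →
      ‖fderiv ℝ F x e‖ ≤ 6 * S / h + 4 * K * h := by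
    intro e he
    have hmem : ∀ τ : ℝ, τ ∈ Set.Icc (0:ℝ) (2*h) → ‖(x + τ • e) - x‖ ≤ 2*h := by
      intro τ hτ
      rw [add_sub_cancel_left, norm_smul, he, mul_one, Real.norm_eq_abs,
        abs_of_nonneg hτ.1]
      exact hτ.2
    set ψ : ℝ → ℝ := fun σ => F (x + σ • e) with hψdef
    have hψ : Differentiable ℝ ψ := hFdiff.comp ((differentiable_id.smul_const e).const_add x)
    have hdψ : deriv ψ = fun σ => fderiv ℝ F (x + σ • e) e :=
      funext fun τ => (hasDerivAt_line F hFdiff x e τ).deriv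
    have hψ' : Differentiable ℝ (deriv ψ) := by
      rw [hdψ]; exact fun τ => (hasDerivAt_line2 F hF' x e τ).differentiableAt
    have hddψ : ∀ τ, deriv (deriv ψ) τ = fderiv ℝ (fderiv ℝ F) (x + τ • e) e e := by
      intro τ; rw [hdψ]; exact (hasDerivAt_line2 F hF' x e τ).deriv
    have hlan := landau_est ψ hψ hψ' h S (2*K) hh ?_ (by positivity) ?_
    · have h0 : deriv ψ 0 = fderiv ℝ F x e := by
        rw [hdψ]; simp
      rw [h0, Real.norm_eq_abs] at hlan
      calc ‖fderiv ℝ F x e‖ ≤ 6 * S / h + 2 * (2*K) * h := hlan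
        _ = 6 * S / h + 4 * K * h := by ring
    · intro τ hτ
      rw [hψdef]
      simp only [Real.norm_eq_abs]
      rw [hFu]
      exact hS _ (hmem τ hτ)
    · intro τ hτ
      rw [hddψ τ, hddψ 0]
      simp only [zero_smul, add_zero]
      calc ‖fderiv ℝ (fderiv ℝ F) (x + τ • e) e e - fderiv ℝ (fderiv ℝ F) x e e‖
          ≤ ‖iteratedFDeriv ℝ 2 F (x + τ • e) - iteratedFDeriv ℝ 2 F x‖ :=
            snd_deriv_apply_sub_le F x (x + τ • e) e he
        _ = ‖spaceTimeDeriv d u 2 0 (x + τ • e) s - spaceTimeDeriv d u 2 0 x s‖ := rfl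
        _ ≤ K := hK _ (hmem τ hτ)
        _ ≤ 2*K := by linarith
  exact norm_iFD_one_le F x hB0 unit

end Engines

noncomputable def Pfun (ρ ρ' : ℝ) (k ℓ : ℕ) : ℝ :=
  ρ' + ((2*k+4 - ℓ : ℕ) : ℝ) * ((ρ - ρ') / (2*(k:ℝ)+5))

lemma exp_rpow' (x y : ℝ) : (Real.exp x) ^ y = Real.exp (x * y) := by
  rw [Real.rpow_def_of_pos (Real.exp_pos x), Real.log_exp]

lemma div_exp_eq (C' h₀ t RL Rprev : ℝ) (hh₀ : h₀ ≠ 0) :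
    2*(C'*Real.exp (Rprev*t))/(h₀*Real.exp (-(RL-Rprev)*t)) = (2*C'/h₀)*Real.exp (RL*t) := by
  have h1 : Real.exp (RL*t) = Real.exp (Rprev*t) / Real.exp (-(RL-Rprev)*t) := by
    rw [← Real.exp_sub]; congr 1; ring
  rw [h1]
  have h2 : Real.exp (-(RL-Rprev)*t) ≠ 0 := (Real.exp_pos _).ne'
  field_simp

lemma K_le (C₀ h₀ β γ t E RL : ℝ) (hC₀ : 0 ≤ C₀) (hh₀0 : 0 < h₀) (hh₀1 : h₀ ≤ 1)
    (hγ : 0 ≤ γ) (ht : 1 ≤ t) (hrate : E - γ*β ≤ RL) :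
    C₀ * Real.exp (E*t) * (h₀*Real.exp (-β*t)) ^ γ ≤ C₀ * Real.exp (RL*t) := by
  rw [Real.mul_rpow hh₀0.le (Real.exp_pos _).le, exp_rpow']
  calc C₀ * Real.exp (E*t) * (h₀^γ * Real.exp (-β*t*γ))
      ≤ C₀ * Real.exp (E*t) * (1 * Real.exp (-β*t*γ)) := by
        gcongr
        exact Real.rpow_le_one hh₀0.le hh₀1 hγ
    _ = C₀ * Real.exp ((E - γ*β)*t) := by
        rw [one_mul, mul_assoc, ← Real.exp_add]; congr 2; ring
    _ ≤ C₀ * Real.exp (RL*t) :=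
        mul_le_mul_of_nonneg_left (Real.exp_le_exp.2 (by nlinarith)) hC₀

section RateWrappers
variable {α : ℝ} (hα0 : 0 < α) (hα1 : α < 1)
include hα0 hα1

lemma rate_spatial' (ℓ : ℕ) (hℓ : 2 ≤ ℓ) :
    ((ℓ:ℝ) - 4)/2 - α * (Rfun α ℓ - Rfun α (ℓ-1)) ≤ Rfun α ℓ := by
  rcases eq_or_lt_of_le hℓ with h2 | h3
  · have h2' : ℓ = 2 := h2.symm
    subst h2'
    have := rate_spatial2 hα0 hα1
    norm_num
    linarith
  · have e1 : Rfun α ℓ = -2 + (ℓ:ℝ)^2/(2*((ℓ:ℝ)+α)) := by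
      unfold Rfun; rw [if_neg (by omega)]
    have hc : ((ℓ-1 : ℕ):ℝ) = (ℓ:ℝ)-1 := by
      rw [Nat.cast_sub (by omega)]; norm_num
    have e2 : Rfun α (ℓ-1) = -2 + ((ℓ:ℝ)-1)^2/(2*(((ℓ:ℝ)-1)+α)) := by
      unfold Rfun; rw [if_neg (by omega), hc]
    rw [e1, e2]
    exact rate_spatial hα0 hα1 (by exact_mod_cast h3)

lemma rate_time' (ℓ : ℕ) (hℓ : 2 ≤ ℓ) (hne : ℓ ≠ 3) :
    ((ℓ:ℝ) - 4)/2 - (α/2) * (Rfun α ℓ - Rfun α (ℓ-2)) ≤ Rfun α ℓ := by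
  have e1 : Rfun α ℓ = -2 + (ℓ:ℝ)^2/(2*((ℓ:ℝ)+α)) := by
    unfold Rfun; rw [if_neg (by omega)]
  have hc : ((ℓ-2 : ℕ):ℝ) = (ℓ:ℝ)-2 := by
    rw [Nat.cast_sub (by omega)]; norm_num
  have e2 : Rfun α (ℓ-2) = -2 + ((ℓ:ℝ)-2)^2/(2*(((ℓ:ℝ)-2)+α)) := by
    unfold Rfun; rw [if_neg (by omega), hc]
  rw [e1, e2]
  exact rate_time hα0 hα1 (by exact_mod_cast hℓ)

end RateWrappers

set_option maxHeartbeats 1000000 in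
lemma key_induction (d : ℕ) {ρ ρ' α : ℝ} (hρ' : 0 < ρ') (hρ : ρ' < ρ)
    (hα0 : 0 < α) (hα1 : α < 1) {k : ℕ} (hk : 4 ≤ k) {C₀ : ℝ} (hC₀ : 0 < C₀)
    (u : EuclideanSpace ℝ (Fin d) × ℝ → ℝ) (hu : ContDiff ℝ (⊤ : ℕ∞) u)
    (h1 : ∀ t ≥ (1:ℝ), ∀ z ∈ parabolicCylinder d ρ t, |u z| ≤ C₀ * Real.exp (-2*t))
    (h3 : ∀ t ≥ (1:ℝ), ∀ ℓ : ℕ, 2 ≤ ℓ → ℓ ≤ 2*k+4 →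
      frakDHolderLE d u ℓ α (parabolicCylinder d ρ t)
        (C₀ * Real.exp (((ℓ:ℝ) - 4)*t/2))) :
    ∀ ℓ : ℕ, ∃ C : ℝ, 0 < C ∧ (ℓ ≤ 2*k+4 → ∀ t : ℝ, 1 ≤ t → ∀ p q : ℕ, p + 2*q = ℓ →
      ∀ x : EuclideanSpace ℝ (Fin d), ∀ s : ℝ, ‖x‖ ≤ Pfun ρ ρ' k ℓ →
      t - 1 ≤ s → s ≤ t →
      ‖spaceTimeDeriv d u p q x s‖ ≤ C * Real.exp (Rfun α ℓ * t)) := by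
  have hδ : 0 < (ρ - ρ') / (2*(k:ℝ)+5) := div_pos (by linarith) (by positivity)
  set δ : ℝ := (ρ - ρ') / (2*(k:ℝ)+5) with hδdef
  set h₀ : ℝ := min δ (1/2) with hh₀def
  have hh₀ : 0 < h₀ := lt_min hδ (by norm_num)
  have hh₀δ : h₀ ≤ δ := min_le_left _ _
  have hh₀2 : h₀ ≤ 1/2 := min_le_right _ _
  have hh₀1 : h₀ ≤ 1 := by linarith
  have hPanti : ∀ m ℓ : ℕ, m ≤ ℓ → Pfun ρ ρ' k ℓ ≤ Pfun ρ ρ' k m := by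
    intro m ℓ h
    unfold Pfun
    have hle : ((2*k+4-ℓ:ℕ):ℝ) ≤ ((2*k+4-m:ℕ):ℝ) := by
      exact_mod_cast Nat.sub_le_sub_left h _
    have := mul_le_mul_of_nonneg_right hle hδ.le
    linarith
  have hP0 : Pfun ρ ρ' k 0 + δ = ρ := by
    unfold Pfun
    rw [Nat.sub_zero, hδdef]
    push_cast
    field_simp
    ring
  have hPsucc : ∀ ℓ : ℕ, ℓ + 1 ≤ 2*k+4 → Pfun ρ ρ' k (ℓ+1) + δ = Pfun ρ ρ' k ℓ := by
    intro ℓ hℓ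
    unfold Pfun
    have hc : (2*k+4 - ℓ : ℕ) = (2*k+4 - (ℓ+1) : ℕ) + 1 := by omega
    rw [hc]
    push_cast
    ring
  have hPρ : ∀ ℓ : ℕ, Pfun ρ ρ' k ℓ + δ ≤ ρ := by
    intro ℓ
    have := hPanti 0 ℓ (Nat.zero_le _)
    linarith [hP0]
  have hPρ' : ∀ ℓ : ℕ, Pfun ρ ρ' k ℓ ≤ ρ := fun ℓ => by linarith [hPρ ℓ, hδ]
  have hdistnn : ∀ z w : EuclideanSpace ℝ (Fin d) × ℝ, 0 ≤ parabolicDist d z w :=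
    fun z w => add_nonneg (norm_nonneg _) (Real.rpow_nonneg (abs_nonneg _) _)
  have hHold : ∀ t : ℝ, 1 ≤ t → ∀ ℓ p q : ℕ, 2 ≤ ℓ → ℓ ≤ 2*k+4 → p + 2*q = ℓ →
      ∀ z ∈ parabolicCylinder d ρ t, ∀ w ∈ parabolicCylinder d ρ t,
      ‖spaceTimeDeriv d u p q z.1 z.2 - spaceTimeDeriv d u p q w.1 w.2‖ ≤
        (C₀ * Real.exp (((ℓ:ℝ)-4)*t/2)) * parabolicDist d z w ^ α := by
    intro t ht ℓ p q hℓ2 hℓk hpq z hz w hw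
    obtain ⟨M, hM0, hMs, hMb⟩ := h3 t ht ℓ hℓ2 hℓk
    have hqmem : q ∈ Finset.range (ℓ / 2 + 1) := Finset.mem_range.2 (by omega)
    have hMq : M q ≤ C₀ * Real.exp (((ℓ:ℝ) - 4) * t / 2) :=
      le_trans (Finset.single_le_sum (fun i _ => hM0 i) hqmem) hMs
    have hb := hMb q hqmem z hz w hw
    have hp : ℓ - 2*q = p := by omega
    rw [hp] at hb
    exact le_trans hb (mul_le_mul_of_nonneg_right hMq
      (Real.rpow_nonneg (hdistnn z w) α))
  have hdspace : ∀ (y x : EuclideanSpace ℝ (Fin d)) (s : ℝ),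
      parabolicDist d (y, s) (x, s) = ‖y - x‖ := by
    intro y x s
    unfold parabolicDist
    simp only
    rw [sub_self, abs_zero, Real.zero_rpow (by norm_num), add_zero]
  have hdtime : ∀ (x : EuclideanSpace ℝ (Fin d)) (σ s : ℝ),
      parabolicDist d (x, σ) (x, s) = |σ - s| ^ ((1:ℝ)/2) := by
    intro x σ s
    unfold parabolicDist
    simp only
    rw [sub_self, norm_zero, zero_add]
  intro ℓ
  induction ℓ using Nat.strong_induction_on with
  | _ ℓ IH =>
  rcases ℓ with _ | ℓ'
  · -- ℓ = 0
    refine ⟨C₀, hC₀, ?_⟩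
    intro hℓk t ht p q hpq x s hx hs1 hs2
    have hp0 : p = 0 := by omega
    have hq0 : q = 0 := by omega
    subst hp0; subst hq0
    have hxρ : ‖x‖ ≤ ρ := le_trans hx (hPρ' 0)
    have hb := h1 t ht (x, s) ⟨hxρ, hs1, hs2⟩
    calc ‖spaceTimeDeriv d u 0 0 x s‖
        = |iteratedDeriv 0 (fun τ => u (x, τ)) s| := norm_iteratedFDeriv_zero
      _ = |u (x, s)| := by rw [iteratedDeriv_zero]
      _ ≤ C₀ * Real.exp (-2*t) := hb
      _ = C₀ * Real.exp (Rfun α 0 * t) := by rw [Rfun_zero hα0]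
  rcases ℓ' with _ | n
  · -- ℓ = 1
    refine ⟨6*C₀/h₀ + 8*C₀, by positivity, ?_⟩
    intro hℓk t ht p q hpq x s hx hs1 hs2
    have hp1 : p = 1 := by omega
    have hq0 : q = 0 := by omega
    subst hp1; subst hq0
    set β : ℝ := Rfun α 1 - Rfun α 0 with hβdef
    have hβval : β = 1/(2+α) := by
      rw [hβdef, Rfun_one hα0, Rfun_zero hα0]; ring
    have hβpos : 0 < β := by rw [hβval]; positivity
    set h : ℝ := h₀ * Real.exp (-β*t) with hhdef
    have hh : 0 < h := by positivity
    have hhh₀ : h ≤ h₀ := by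
      rw [hhdef]
      nth_rewrite 2 [← mul_one h₀]
      gcongr
      exact Real.exp_le_one_iff.2 (by nlinarith)
    have hmemρ : ∀ y : EuclideanSpace ℝ (Fin d), ‖y - x‖ ≤ 2*h →
        (y, s) ∈ parabolicCylinder d ρ t := by
      intro y hy
      refine ⟨?_, hs1, hs2⟩
      have h1y : ‖y‖ ≤ ‖x‖ + ‖y - x‖ := by
        calc ‖y‖ = ‖x + (y - x)‖ := by rw [add_sub_cancel]
          _ ≤ ‖x‖ + ‖y - x‖ := norm_add_le _ _
      have hP1 : Pfun ρ ρ' k 1 + 2*δ ≤ ρ := by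
        have e1 := hPsucc 0 (by omega)
        linarith [hPρ 0]
      have : 2*h ≤ 2*δ := by linarith [le_trans hhh₀ hh₀δ]
      linarith [hx]
    have hK0 : (0:ℝ) ≤ C₀ * Real.exp (((2:ℝ)-4)*t/2) * (2*h)^α := by positivity
    have hengine := ell1_engine u hu x s h (C₀ * Real.exp (-2*t))
      (C₀ * Real.exp (((2:ℝ)-4)*t/2) * (2*h)^α) hh hK0 ?_ ?_
    · refine le_trans hengine ?_
      have A1 : 6*(C₀*Real.exp (-2*t))/h = (6*C₀/h₀)*Real.exp (Rfun α 1 * t) := by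
        rw [hhdef]
        have hR1 : Rfun α 1 = -2 + β := by
          rw [hβdef, Rfun_zero hα0]; ring
        have e1 : Real.exp (Rfun α 1 * t) = Real.exp (-2*t) / Real.exp (-β*t) := by
          rw [← Real.exp_sub]; congr 1
          rw [hR1]; ring
        rw [e1]
        have h2 : Real.exp (-β*t) ≠ 0 := (Real.exp_pos _).ne'
        field_simp
      have A2 : 4*(C₀ * Real.exp (((2:ℝ)-4)*t/2) * (2*h)^α)*h ≤
          (8*C₀)*Real.exp (Rfun α 1 * t) := by
        have e2h : (2*h)^α ≤ 2*h^α := by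
          rw [Real.mul_rpow (by norm_num) hh.le]
          gcongr
          calc (2:ℝ)^α ≤ (2:ℝ)^(1:ℝ) :=
            Real.rpow_le_rpow_of_exponent_le (by norm_num) (by linarith)
            _ = 2 := Real.rpow_one 2
        have hha : (0:ℝ) ≤ h^α := Real.rpow_nonneg hh.le α
        have step1 : 4*(C₀ * Real.exp (((2:ℝ)-4)*t/2) * (2*h)^α)*h ≤
            8*(C₀ * Real.exp (-(1:ℝ)*t) * h^(α+1)) := by
          have hE : ((2:ℝ)-4)*t/2 = -(1:ℝ)*t := by ring
          rw [hE]
          have hpow : h^(α+1) = h^α * h := by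
            rw [Real.rpow_add hh, Real.rpow_one]
          rw [hpow]
          have hx1 := Real.exp_pos (-(1:ℝ)*t)
          nlinarith [mul_le_mul_of_nonneg_right e2h hh.le,
            mul_pos hC₀ hx1, mul_nonneg (mul_nonneg hC₀.le hx1.le) (mul_nonneg hha hh.le)]
        refine le_trans step1 ?_
        have := K_le (8*C₀) h₀ β (α+1) t (-(1:ℝ)) (Rfun α 1) (by positivity) hh₀ hh₀1
          (by linarith) ht ?_
        · rw [hhdef]
          calc 8*(C₀ * Real.exp (-(1:ℝ)*t) * (h₀ * Real.exp (-β*t))^(α+1))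
              = (8*C₀) * Real.exp (-(1:ℝ)*t) * (h₀ * Real.exp (-β*t))^(α+1) := by ring
            _ ≤ (8*C₀)*Real.exp (Rfun α 1 * t) := this
        · have := rate_l1 hα0 hα1
          rw [← hβdef] at this
          linarith
      calc 6*(C₀*Real.exp (-2*t))/h + 4*(C₀ * Real.exp (((2:ℝ)-4)*t/2) * (2*h)^α)*h
          ≤ (6*C₀/h₀)*Real.exp (Rfun α 1 * t) + (8*C₀)*Real.exp (Rfun α 1 * t) := by
            rw [A1]; linarith [A2]
        _ = (6*C₀/h₀ + 8*C₀) * Real.exp (Rfun α 1 * t) := by ring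
    · -- hS
      intro y hy
      exact h1 t ht (y, s) (hmemρ y hy)
    · -- hK
      intro y hy
      have hb := hHold t ht 2 2 0 le_rfl (by omega) rfl (y, s) (hmemρ y hy) (x, s)
        (hmemρ x (by rw [sub_self, norm_zero]; linarith))
      rw [hdspace] at hb
      push_cast at hb
      refine le_trans hb ?_
      refine mul_le_mul_of_nonneg_left ?_ (by positivity)
      exact Real.rpow_le_rpow (norm_nonneg _) hy (by linarith)
  · -- ℓ = n+2
    obtain ⟨C₁, hC₁, hIH1⟩ := IH (n+1) (by omega)
    obtain ⟨C₂, hC₂, hIH2⟩ := IH n (by omega)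
    refine ⟨2*(C₁+C₂)/h₀ + C₀, by positivity, ?_⟩
    intro hℓk t ht p q hpq x s hx hs1 hs2
    have hℓ2 : 2 ≤ n + 2 := by omega
    have hmemx : (x, s) ∈ parabolicCylinder d ρ t :=
      ⟨le_trans hx (hPρ' (n+2)), hs1, hs2⟩
    have hcoef : ∀ E : ℝ, 0 < E → (2*C₂/h₀)*E + C₀*E ≤ (2*(C₁+C₂)/h₀ + C₀)*E := by
      intro E hE
      have h1' : 2*C₂/h₀ ≤ 2*(C₁+C₂)/h₀ := by gcongr; linarith
      nlinarith
    have hcoef1 : ∀ E : ℝ, 0 < E → (2*C₁/h₀)*E + C₀*E ≤ (2*(C₁+C₂)/h₀ + C₀)*E := by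
      intro E hE
      have h1' : 2*C₁/h₀ ≤ 2*(C₁+C₂)/h₀ := by gcongr; linarith
      nlinarith
    rcases p with _ | m
    · -- time component
      obtain ⟨m', rfl⟩ : ∃ m', q = m' + 1 := ⟨q - 1, by omega⟩
      have hn : n = 2 * m' := by omega
      set β : ℝ := Rfun α (n+2) - Rfun α n with hβdef
      have hβ0 : 0 ≤ β := by
        rw [hβdef]
        have := Rfun_le_of_le hα0 (show n ≤ n+2 by omega)
        linarith
      set h : ℝ := h₀ * Real.exp (-β*t) with hhdef
      have hh : 0 < h := by positivity
      have hhh₀ : h ≤ h₀ := by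
        rw [hhdef]
        nth_rewrite 2 [← mul_one h₀]
        gcongr
        exact Real.exp_le_one_iff.2 (by nlinarith)
      have hengine := time_engine u hu m' x s t h (C₂ * Real.exp (Rfun α n * t))
        (C₀ * Real.exp (((n:ℝ)+2-4)/2*t) * h ^ ((1:ℝ)/2*α)) hh (le_trans hhh₀ hh₀2)
        hs1 hs2 ?_ ?_
      · refine le_trans hengine ?_
        have A1 : 2*(C₂ * Real.exp (Rfun α n * t))/h =
            (2*C₂/h₀)*Real.exp (Rfun α (n+2) * t) := by
          rw [hhdef, hβdef]
          exact div_exp_eq C₂ h₀ t (Rfun α (n+2)) (Rfun α n) hh₀.ne'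
        have hrate : ((n:ℝ)+2-4)/2 - ((1:ℝ)/2*α)*β ≤ Rfun α (n+2) := by
          have hrt := rate_time' hα0 hα1 (n+2) (by omega) (by omega)
          have hsub : (n+2) - 2 = n := by omega
          rw [hsub] at hrt
          push_cast at hrt
          rw [hβdef]
          ring_nf at hrt ⊢
          linarith
        have A2 : C₀ * Real.exp (((n:ℝ)+2-4)/2*t) * h ^ ((1:ℝ)/2*α) ≤
            C₀ * Real.exp (Rfun α (n+2) * t) := by
          rw [hhdef]
          exact K_le C₀ h₀ β ((1:ℝ)/2*α) t (((n:ℝ)+2-4)/2) (Rfun α (n+2))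
            hC₀.le hh₀ hh₀1 (by positivity) ht hrate
        calc 2*(C₂ * Real.exp (Rfun α n * t))/h +
              C₀ * Real.exp (((n:ℝ)+2-4)/2*t) * h ^ ((1:ℝ)/2*α)
            ≤ (2*C₂/h₀)*Real.exp (Rfun α (n+2) * t) +
              C₀*Real.exp (Rfun α (n+2) * t) := by rw [A1]; linarith [A2]
          _ ≤ (2*(C₁+C₂)/h₀ + C₀) * Real.exp (Rfun α (n+2) * t) :=
              hcoef _ (Real.exp_pos _)
      · -- hS
        intro σ hσ1 hσ2
        exact hIH2 (by omega) t ht 0 m' (by omega) x σ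
          (le_trans hx (hPanti n (n+2) (by omega))) hσ1 hσ2
      · -- hK
        intro σ hσ1 hσ2 hσh
        have hb := hHold t ht (n+2) 0 (m'+1) hℓ2 hℓk (by omega) (x, σ)
          ⟨le_trans hx (hPρ' (n+2)), hσ1, hσ2⟩ (x, s) hmemx
        rw [hdtime] at hb
        have hconv : (((n+2:ℕ):ℝ) - 4)*t/2 = ((n:ℝ)+2-4)/2*t := by push_cast; ring
        rw [hconv] at hb
        refine le_trans hb ?_
        refine mul_le_mul_of_nonneg_left ?_ (by positivity)
        calc (|σ - s| ^ ((1:ℝ)/2)) ^ α ≤ (h ^ ((1:ℝ)/2)) ^ α := by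
              refine Real.rpow_le_rpow (Real.rpow_nonneg (abs_nonneg _) _) ?_ hα0.le
              exact Real.rpow_le_rpow (abs_nonneg _) hσh (by norm_num)
          _ = h ^ ((1:ℝ)/2*α) := by rw [← Real.rpow_mul hh.le]
    · -- spatial component, p = m+1
      set β : ℝ := Rfun α (n+2) - Rfun α (n+1) with hβdef
      have hβ0 : 0 ≤ β := by
        rw [hβdef]
        have := Rfun_le_of_le hα0 (show n+1 ≤ n+2 by omega)
        linarith
      set h : ℝ := h₀ * Real.exp (-β*t) with hhdef
      have hh : 0 < h := by positivity
      have hhh₀ : h ≤ h₀ := by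
        rw [hhdef]
        nth_rewrite 2 [← mul_one h₀]
        gcongr
        exact Real.exp_le_one_iff.2 (by nlinarith)
      have hengine := spatial_engine u hu q m x s h (C₁ * Real.exp (Rfun α (n+1) * t))
        (C₀ * Real.exp (((n:ℝ)+2-4)/2*t) * h ^ α) hh ?_ ?_
      · refine le_trans hengine ?_
        have A1 : 2*(C₁ * Real.exp (Rfun α (n+1) * t))/h =
            (2*C₁/h₀)*Real.exp (Rfun α (n+2) * t) := by
          rw [hhdef, hβdef]
          exact div_exp_eq C₁ h₀ t (Rfun α (n+2)) (Rfun α (n+1)) hh₀.ne'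
        have hrate : ((n:ℝ)+2-4)/2 - α*β ≤ Rfun α (n+2) := by
          have hrt := rate_spatial' hα0 hα1 (n+2) (by omega)
          have hsub : (n+2) - 1 = n+1 := by omega
          rw [hsub] at hrt
          push_cast at hrt
          rw [hβdef]
          ring_nf at hrt ⊢
          linarith
        have A2 : C₀ * Real.exp (((n:ℝ)+2-4)/2*t) * h ^ α ≤
            C₀ * Real.exp (Rfun α (n+2) * t) := by
          rw [hhdef]
          exact K_le C₀ h₀ β α t (((n:ℝ)+2-4)/2) (Rfun α (n+2))
            hC₀.le hh₀ hh₀1 hα0.le ht hrate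
        calc 2*(C₁ * Real.exp (Rfun α (n+1) * t))/h +
              C₀ * Real.exp (((n:ℝ)+2-4)/2*t) * h ^ α
            ≤ (2*C₁/h₀)*Real.exp (Rfun α (n+2) * t) +
              C₀*Real.exp (Rfun α (n+2) * t) := by rw [A1]; linarith [A2]
          _ ≤ (2*(C₁+C₂)/h₀ + C₀) * Real.exp (Rfun α (n+2) * t) :=
              hcoef1 _ (Real.exp_pos _)
      · -- hS
        intro y hy
        have hyP : ‖y‖ ≤ Pfun ρ ρ' k (n+1) := by
          have h1y : ‖y‖ ≤ ‖x‖ + ‖y - x‖ := by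
            calc ‖y‖ = ‖x + (y - x)‖ := by rw [add_sub_cancel]
              _ ≤ ‖x‖ + ‖y - x‖ := norm_add_le _ _
          have e1 := hPsucc (n+1) (by omega)
          have : h ≤ δ := le_trans hhh₀ hh₀δ
          linarith
        exact hIH1 (by omega) t ht m q (by omega) y s hyP hs1 hs2
      · -- hK
        intro y hy
        have hyρ : ‖y‖ ≤ ρ := by
          have h1y : ‖y‖ ≤ ‖x‖ + ‖y - x‖ := by
            calc ‖y‖ = ‖x + (y - x)‖ := by rw [add_sub_cancel]
              _ ≤ ‖x‖ + ‖y - x‖ := norm_add_le _ _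
          have : h ≤ δ := le_trans hhh₀ hh₀δ
          linarith [hPρ (n+2)]
        have hb := hHold t ht (n+2) (m+1) q hℓ2 hℓk (by omega) (y, s)
          ⟨hyρ, hs1, hs2⟩ (x, s) hmemx
        rw [hdspace] at hb
        have hconv : (((n+2:ℕ):ℝ) - 4)*t/2 = ((n:ℝ)+2-4)/2*t := by push_cast; ring
        rw [hconv] at hb
        refine le_trans hb ?_
        refine mul_le_mul_of_nonneg_left ?_ (by positivity)
        exact Real.rpow_le_rpow (norm_nonneg _) hy hα0.le

/-- Interpolation estimates for the time derivatives of the expansion coefficients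
(Lemma 4.5 of the paper, in conditional form). -/
theorem interp_time_deriv_coefficients
    (d : ℕ) (hd : 1 ≤ d) (ρ ρ' : ℝ) (hρ' : 0 < ρ') (hρ : ρ' < ρ)
    (α : ℝ) (hα0 : 0 < α) (hα1 : α < 1) (k : ℕ) (hk : 4 ≤ k) (C₀ : ℝ) (hC₀ : 0 < C₀)
    (u : EuclideanSpace ℝ (Fin d) × ℝ → ℝ) (hu : ContDiff ℝ (⊤ : ℕ∞) u)
    (h1 : ∀ t ≥ (1 : ℝ), ∀ z ∈ parabolicCylinder d ρ t, |u z| ≤ C₀ * Real.exp (-2 * t))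
    (h2 : ∀ t ≥ (1 : ℝ), frakDHolderLE d u 2 α (parabolicCylinder d ρ t) (C₀ * Real.exp (-t)))
    (h3 : ∀ t ≥ (1 : ℝ), ∀ ℓ : ℕ, 2 ≤ ℓ → ℓ ≤ 2 * k + 4 →
      frakDHolderLE d u ℓ α (parabolicCylinder d ρ t)
        (C₀ * Real.exp (((ℓ : ℝ) - 4) * t / 2))) :
    ∃ C > 0, ∀ t ≥ (1 : ℝ),
      (∀ ℓ : ℕ, ℓ ≤ 2 → ∀ z ∈ parabolicCylinder d ρ' t,
        frakDNorm d u ℓ z ≤ C * Real.exp (-(t / 2) * (4 - 2 * (ℓ : ℝ) / (2 + α)))) ∧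
      (∀ ℓ : ℕ, 2 ≤ ℓ → ℓ ≤ 2 * k + 4 → ∀ z ∈ parabolicCylinder d ρ' t,
        frakDNorm d u ℓ z ≤
          C * Real.exp (-(t / 2) * (4 - (ℓ : ℝ) ^ 2 / ((ℓ : ℝ) + α)))) := by
  have key := key_induction d hρ' hρ hα0 hα1 hk hC₀ u hu h1 h3
  choose Cf hCfpos hCf using key
  have hCsum0 : (0:ℝ) ≤ ∑ j ∈ Finset.range (2*k+5), ((j/2+1 : ℕ):ℝ) * Cf j :=
    Finset.sum_nonneg (fun j _ => mul_nonneg (Nat.cast_nonneg _) (hCfpos j).le)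
  refine ⟨1 + ∑ j ∈ Finset.range (2*k+5), ((j/2+1 : ℕ):ℝ) * Cf j, by linarith, ?_⟩
  have main : ∀ t : ℝ, 1 ≤ t → ∀ ℓ : ℕ, ℓ ≤ 2*k+4 → ∀ z ∈ parabolicCylinder d ρ' t,
      frakDNorm d u ℓ z ≤ (1 + ∑ j ∈ Finset.range (2*k+5), ((j/2+1 : ℕ):ℝ) * Cf j) *
        Real.exp (Rfun α ℓ * t) := by
    intro t ht ℓ hℓk z hz
    obtain ⟨hz1, hz2, hz3⟩ := hz
    have hB0 : 0 < Cf ℓ * Real.exp (Rfun α ℓ * t) := mul_pos (hCfpos ℓ) (Real.exp_pos _)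
    have hxP : ‖z.1‖ ≤ Pfun ρ ρ' k ℓ := by
      refine le_trans hz1 ?_
      unfold Pfun
      have h0 : (0:ℝ) ≤ ((2*k+4-ℓ:ℕ):ℝ) * ((ρ - ρ')/(2*(k:ℝ)+5)) :=
        mul_nonneg (Nat.cast_nonneg _) (div_nonneg (by linarith) (by positivity))
      linarith
    have hterm : ∀ j ∈ Finset.range (ℓ/2 + 1),
        ‖spaceTimeDeriv d u (ℓ - 2*j) j z.1 z.2‖ ^ 2 ≤
          (Cf ℓ * Real.exp (Rfun α ℓ * t))^2 := by
      intro j hj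
      have hjm := Finset.mem_range.1 hj
      have hb := hCf ℓ hℓk t ht (ℓ - 2*j) j (by omega) z.1 z.2 hxP hz2 hz3
      exact pow_le_pow_left₀ (norm_nonneg _) hb 2
    have hsum : (∑ j ∈ Finset.range (ℓ/2+1),
        ‖spaceTimeDeriv d u (ℓ - 2*j) j z.1 z.2‖ ^ 2) ≤
        ((ℓ/2+1 : ℕ):ℝ) * (Cf ℓ * Real.exp (Rfun α ℓ * t))^2 := by
      calc (∑ j ∈ Finset.range (ℓ/2+1), ‖spaceTimeDeriv d u (ℓ - 2*j) j z.1 z.2‖ ^ 2)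
          ≤ ∑ _j ∈ Finset.range (ℓ/2+1), (Cf ℓ * Real.exp (Rfun α ℓ * t))^2 :=
            Finset.sum_le_sum hterm
        _ = ((ℓ/2+1 : ℕ):ℝ) * (Cf ℓ * Real.exp (Rfun α ℓ * t))^2 := by
            rw [Finset.sum_const, Finset.card_range, nsmul_eq_mul]
    have h1n : (1:ℝ) ≤ ((ℓ/2+1 : ℕ):ℝ) := by
      exact_mod_cast Nat.succ_le_succ (Nat.zero_le _)
    have hfr : frakDNorm d u ℓ z ≤ ((ℓ/2+1 : ℕ):ℝ) * (Cf ℓ * Real.exp (Rfun α ℓ * t)) := by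
      unfold frakDNorm
      refine le_trans (Real.sqrt_le_sqrt hsum) ?_
      have hsq : ((ℓ/2+1 : ℕ):ℝ) * (Cf ℓ * Real.exp (Rfun α ℓ * t))^2 ≤
          (((ℓ/2+1 : ℕ):ℝ) * (Cf ℓ * Real.exp (Rfun α ℓ * t)))^2 := by nlinarith
      refine le_trans (Real.sqrt_le_sqrt hsq) ?_
      rw [Real.sqrt_sq (by positivity)]
    refine le_trans hfr ?_
    have hcle : ((ℓ/2+1 : ℕ):ℝ) * Cf ℓ ≤
        1 + ∑ j ∈ Finset.range (2*k+5), ((j/2+1 : ℕ):ℝ) * Cf j := by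
      have hmem : ℓ ∈ Finset.range (2*k+5) := Finset.mem_range.2 (by omega)
      have := Finset.single_le_sum (f := fun j => ((j/2+1 : ℕ):ℝ) * Cf j)
        (fun j _ => mul_nonneg (Nat.cast_nonneg _) (hCfpos j).le) hmem
      linarith
    calc ((ℓ/2+1 : ℕ):ℝ) * (Cf ℓ * Real.exp (Rfun α ℓ * t))
        = (((ℓ/2+1 : ℕ):ℝ) * Cf ℓ) * Real.exp (Rfun α ℓ * t) := by ring
      _ ≤ _ := mul_le_mul_of_nonneg_right hcle (Real.exp_pos _).le
  intro t ht
  constructor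
  · intro ℓ hℓ2 z hz
    have hm := main t ht ℓ (by omega) z hz
    have hexp : Real.exp (Rfun α ℓ * t) =
        Real.exp (-(t/2) * (4 - 2*(ℓ:ℝ)/(2+α))) := by
      congr 1
      have h2α : (2+α) ≠ 0 := by positivity
      interval_cases ℓ
      · rw [Rfun_zero hα0]; push_cast; field_simp; ring
      · rw [Rfun_one hα0]; push_cast; field_simp; ring
      · rw [Rfun_two hα0]; push_cast; field_simp; ring
    rwa [hexp] at hm
  · intro ℓ hℓ2 hℓk z hz
    have hm := main t ht ℓ hℓk z hz
    have hexp : Real.exp (Rfun α ℓ * t) =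
        Real.exp (-(t/2) * (4 - (ℓ:ℝ)^2/((ℓ:ℝ)+α))) := by
      congr 1
      have e1 : Rfun α ℓ = -2 + (ℓ:ℝ)^2/(2*((ℓ:ℝ)+α)) := by
        unfold Rfun; rw [if_neg (by omega)]
      rw [e1]
      have hℓα : ((ℓ:ℝ)+α) ≠ 0 := by positivity
      field_simp
      ring
    rwa [hexp] at hm
end

section
/- Block-matrix inverse asymptotics (the linear-algebra core of Proposition 4.7 of the paper, which computes the base/fiber blocks of the inverse of the evolving metric by Schur complements): Let m, n ≥ 1 be integers, let A be an invertible m×m real matrix and D an invertible n×n real matrix, and let C₀ > 0. For each t ≥ 0 let P(t) be an m×m matrix, Q(t) an m×n matrix, R(t) an n×m matrix, and S(t) an n×n matrix, such that ‖P(t)‖ → 0 as t → ∞ and ‖Q(t)‖ ≤ C₀e^{−t}, ‖R(t)‖ ≤ C₀e^{−t}, ‖S(t)‖ ≤ C₀e^{−t} for all t ≥ 0. Define the (m+n)×(m+n) block matrix M(t) := fromBlocks (A + P(t)) (Q(t)) (R(t)) (e^{−t}(D + S(t))). Then there exists T ≥ 0 such that M(t) is invertible for every t ≥ T, and, writing M(t)⁻¹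 in blocks of the same sizes as fromBlocks W(t) X(t) Y(t) Z(t), the following hold: ‖W(t) − A⁻¹‖ → 0 as t → ∞; sup_{t ≥ T} (‖X(t)‖ + ‖Y(t)‖) < ∞; and there exists C > 0 with ‖e^{−t}Z(t) − D⁻¹‖ ≤ C e^{−t} for all t ≥ T. -/
open Real Matrix Filter

attribute [local instance] Matrix.linftyOpNormedAddCommGroup Matrix.linftyOpNormedRing

attribute [local instance] Matrix.linftyOpNormedSpace

section BlockAux
variable {α β : Type*} [Fintype α] [Fintype β]

lemma nnnorm_toBlocks₁₁_le (M : Matrix (α ⊕ β) (α ⊕ β) ℝ) : ‖M.toBlocks₁₁‖₊ ≤ ‖M‖₊ := by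
  rw [Matrix.linfty_opNNNorm_def, Matrix.linfty_opNNNorm_def]
  refine Finset.sup_le fun i _ => le_trans ?_ (Finset.le_sup (Finset.mem_univ (Sum.inl i)))
  rw [Fintype.sum_sum_type]
  exact le_trans (le_of_eq rfl) le_self_add

lemma nnnorm_toBlocks₁₂_le (M : Matrix (α ⊕ β) (α ⊕ β) ℝ) : ‖M.toBlocks₁₂‖₊ ≤ ‖M‖₊ := by
  rw [Matrix.linfty_opNNNorm_def, Matrix.linfty_opNNNorm_def]
  refine Finset.sup_le fun i _ => le_trans ?_ (Finset.le_sup (Finset.mem_univ (Sum.inl i)))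
  rw [Fintype.sum_sum_type]
  exact le_trans (le_of_eq rfl) le_add_self

lemma nnnorm_toBlocks₂₁_le (M : Matrix (α ⊕ β) (α ⊕ β) ℝ) : ‖M.toBlocks₂₁‖₊ ≤ ‖M‖₊ := by
  rw [Matrix.linfty_opNNNorm_def, Matrix.linfty_opNNNorm_def]
  refine Finset.sup_le fun i _ => le_trans ?_ (Finset.le_sup (Finset.mem_univ (Sum.inr i)))
  rw [Fintype.sum_sum_type]
  exact le_trans (le_of_eq rfl) le_self_add

lemma nnnorm_toBlocks₂₂_le (M : Matrix (α ⊕ β) (α ⊕ β) ℝ) : ‖M.toBlocks₂₂‖₊ ≤ ‖M‖₊ := by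
  rw [Matrix.linfty_opNNNorm_def, Matrix.linfty_opNNNorm_def]
  refine Finset.sup_le fun i _ => le_trans ?_ (Finset.le_sup (Finset.mem_univ (Sum.inr i)))
  rw [Fintype.sum_sum_type]
  exact le_trans (le_of_eq rfl) le_add_self

lemma norm_toBlocks₁₁_le (M : Matrix (α ⊕ β) (α ⊕ β) ℝ) : ‖M.toBlocks₁₁‖ ≤ ‖M‖ :=
  nnnorm_toBlocks₁₁_le M
lemma norm_toBlocks₁₂_le (M : Matrix (α ⊕ β) (α ⊕ β) ℝ) : ‖M.toBlocks₁₂‖ ≤ ‖M‖ :=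
  nnnorm_toBlocks₁₂_le M
lemma norm_toBlocks₂₁_le (M : Matrix (α ⊕ β) (α ⊕ β) ℝ) : ‖M.toBlocks₂₁‖ ≤ ‖M‖ :=
  nnnorm_toBlocks₂₁_le M
lemma norm_toBlocks₂₂_le (M : Matrix (α ⊕ β) (α ⊕ β) ℝ) : ‖M.toBlocks₂₂‖ ≤ ‖M‖ :=
  nnnorm_toBlocks₂₂_le M

lemma norm_fromBlocks_le (a : Matrix α α ℝ) (b : Matrix α β ℝ) (c : Matrix β α ℝ)
    (d : Matrix β β ℝ) : ‖Matrix.fromBlocks a b c d‖ ≤ ‖a‖ + ‖b‖ + ‖c‖ + ‖d‖ := by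
  have key : ‖Matrix.fromBlocks a b c d‖₊ ≤ ‖a‖₊ + ‖b‖₊ + ‖c‖₊ + ‖d‖₊ := by
    rw [Matrix.linfty_opNNNorm_def]
    refine Finset.sup_le fun i _ => ?_
    cases i with
    | inl i =>
      rw [Fintype.sum_sum_type]
      simp only [Matrix.fromBlocks_apply₁₁, Matrix.fromBlocks_apply₁₂]
      have ha : (∑ j : α, ‖a i j‖₊) ≤ ‖a‖₊ := by
        rw [Matrix.linfty_opNNNorm_def]
        exact Finset.le_sup (f := fun i => ∑ j : α, ‖a i j‖₊) (Finset.mem_univ i)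
      have hb : (∑ j : β, ‖b i j‖₊) ≤ ‖b‖₊ := by
        rw [Matrix.linfty_opNNNorm_def]
        exact Finset.le_sup (f := fun i => ∑ j : β, ‖b i j‖₊) (Finset.mem_univ i)
      refine le_trans (add_le_add ha hb) ?_
      exact le_trans (le_add_of_nonneg_right (zero_le : (0:NNReal) ≤ ‖c‖₊))
        (le_add_of_nonneg_right (zero_le : (0:NNReal) ≤ ‖d‖₊))
    | inr i =>
      rw [Fintype.sum_sum_type]
      simp only [Matrix.fromBlocks_apply₂₁, Matrix.fromBlocks_apply₂₂]
      have hc : (∑ j : α, ‖c i j‖₊) ≤ ‖c‖₊ := by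
        rw [Matrix.linfty_opNNNorm_def]
        exact Finset.le_sup (f := fun i => ∑ j : α, ‖c i j‖₊) (Finset.mem_univ i)
      have hd : (∑ j : β, ‖d i j‖₊) ≤ ‖d‖₊ := by
        rw [Matrix.linfty_opNNNorm_def]
        exact Finset.le_sup (f := fun i => ∑ j : β, ‖d i j‖₊) (Finset.mem_univ i)
      refine le_trans (add_le_add hc hd) ?_
      calc ‖c‖₊ + ‖d‖₊ ≤ (‖a‖₊ + ‖b‖₊) + (‖c‖₊ + ‖d‖₊) := le_add_self
        _ = ‖a‖₊ + ‖b‖₊ + ‖c‖₊ + ‖d‖₊ := by ring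
  calc ‖Matrix.fromBlocks a b c d‖ = ((‖Matrix.fromBlocks a b c d‖₊ : ℝ)) := rfl
    _ ≤ ((‖a‖₊ + ‖b‖₊ + ‖c‖₊ + ‖d‖₊ : NNReal) : ℝ) := by exact_mod_cast key
    _ = ‖a‖ + ‖b‖ + ‖c‖ + ‖d‖ := by push_cast; rfl

lemma toBlocks₁₁_mul (X Y : Matrix (α ⊕ β) (α ⊕ β) ℝ) :
    (X * Y).toBlocks₁₁ = X.toBlocks₁₁ * Y.toBlocks₁₁ + X.toBlocks₁₂ * Y.toBlocks₂₁ := by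
  conv_lhs => rw [← Matrix.fromBlocks_toBlocks X, ← Matrix.fromBlocks_toBlocks Y]
  rw [Matrix.fromBlocks_multiply, Matrix.toBlocks_fromBlocks₁₁]

lemma toBlocks₁₂_mul (X Y : Matrix (α ⊕ β) (α ⊕ β) ℝ) :
    (X * Y).toBlocks₁₂ = X.toBlocks₁₁ * Y.toBlocks₁₂ + X.toBlocks₁₂ * Y.toBlocks₂₂ := by
  conv_lhs => rw [← Matrix.fromBlocks_toBlocks X, ← Matrix.fromBlocks_toBlocks Y]
  rw [Matrix.fromBlocks_multiply, Matrix.toBlocks_fromBlocks₁₂]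

lemma toBlocks₂₁_mul (X Y : Matrix (α ⊕ β) (α ⊕ β) ℝ) :
    (X * Y).toBlocks₂₁ = X.toBlocks₂₁ * Y.toBlocks₁₁ + X.toBlocks₂₂ * Y.toBlocks₂₁ := by
  conv_lhs => rw [← Matrix.fromBlocks_toBlocks X, ← Matrix.fromBlocks_toBlocks Y]
  rw [Matrix.fromBlocks_multiply, Matrix.toBlocks_fromBlocks₂₁]

lemma toBlocks₂₂_mul (X Y : Matrix (α ⊕ β) (α ⊕ β) ℝ) :
    (X * Y).toBlocks₂₂ = X.toBlocks₂₁ * Y.toBlocks₁₂ + X.toBlocks₂₂ * Y.toBlocks₂₂ := by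
  conv_lhs => rw [← Matrix.fromBlocks_toBlocks X, ← Matrix.fromBlocks_toBlocks Y]
  rw [Matrix.fromBlocks_multiply, Matrix.toBlocks_fromBlocks₂₂]

lemma toBlocks₁₁_sub (X Y : Matrix (α ⊕ β) (α ⊕ β) ℝ) :
    (X - Y).toBlocks₁₁ = X.toBlocks₁₁ - Y.toBlocks₁₁ := rfl
lemma toBlocks₁₂_sub (X Y : Matrix (α ⊕ β) (α ⊕ β) ℝ) :
    (X - Y).toBlocks₁₂ = X.toBlocks₁₂ - Y.toBlocks₁₂ := rfl
lemma toBlocks₂₁_sub (X Y : Matrix (α ⊕ β) (α ⊕ β) ℝ) :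
    (X - Y).toBlocks₂₁ = X.toBlocks₂₁ - Y.toBlocks₂₁ := rfl
lemma toBlocks₂₂_sub (X Y : Matrix (α ⊕ β) (α ⊕ β) ℝ) :
    (X - Y).toBlocks₂₂ = X.toBlocks₂₂ - Y.toBlocks₂₂ := rfl

lemma fromBlocks_sub (a a' : Matrix α α ℝ) (b b' : Matrix α β ℝ) (c c' : Matrix β α ℝ)
    (d d' : Matrix β β ℝ) :
    Matrix.fromBlocks a b c d - Matrix.fromBlocks a' b' c' d' =
      Matrix.fromBlocks (a - a') (b - b') (c - c') (d - d') := by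
  ext i j
  cases i <;> cases j <;> simp [Matrix.fromBlocks]

end BlockAux

set_option maxHeartbeats 2000000 in
/-- Block-matrix inverse asymptotics: the linear-algebra core of Proposition 4.7 of the
paper, computing the base/fiber blocks of the inverse of the evolving metric. -/
theorem block_inverse_asymptotics
    (m n : ℕ) (hm : 1 ≤ m) (hn : 1 ≤ n)
    (A : Matrix (Fin m) (Fin m) ℝ) (hA : IsUnit A)
    (D : Matrix (Fin n) (Fin n) ℝ) (hD : IsUnit D)
    (C₀ : ℝ) (hC₀ : 0 < C₀)
    (P : ℝ → Matrix (Fin m) (Fin m) ℝ) (Q : ℝ → Matrix (Fin m) (Fin n) ℝ)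
    (R : ℝ → Matrix (Fin n) (Fin m) ℝ) (S : ℝ → Matrix (Fin n) (Fin n) ℝ)
    (hP : Tendsto (fun t => ‖P t‖) atTop (nhds 0))
    (hQ : ∀ t ≥ (0 : ℝ), ‖Q t‖ ≤ C₀ * Real.exp (-t))
    (hR : ∀ t ≥ (0 : ℝ), ‖R t‖ ≤ C₀ * Real.exp (-t))
    (hS : ∀ t ≥ (0 : ℝ), ‖S t‖ ≤ C₀ * Real.exp (-t))
    (M : ℝ → Matrix (Fin m ⊕ Fin n) (Fin m ⊕ Fin n) ℝ)
    (hM : ∀ t, M t = Matrix.fromBlocks (A + P t) (Q t) (R t) (Real.exp (-t) • (D + S t))) :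
    ∃ T ≥ (0 : ℝ), (∀ t ≥ T, IsUnit (M t)) ∧
      Tendsto (fun t => ‖Matrix.toBlocks₁₁ (M t)⁻¹ - A⁻¹‖) atTop (nhds 0) ∧
      (∃ C, ∀ t ≥ T, ‖Matrix.toBlocks₁₂ (M t)⁻¹‖ + ‖Matrix.toBlocks₂₁ (M t)⁻¹‖ ≤ C) ∧
      (∃ C > 0, ∀ t ≥ T,
        ‖Real.exp (-t) • Matrix.toBlocks₂₂ (M t)⁻¹ - D⁻¹‖ ≤ C * Real.exp (-t)) := by
  have hAd : IsUnit A.det := (Matrix.isUnit_iff_isUnit_det A).mp hA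
  have hDd : IsUnit D.det := (Matrix.isUnit_iff_isUnit_det D).mp hD
  set N₀ : Matrix (Fin m ⊕ Fin n) (Fin m ⊕ Fin n) ℝ := Matrix.fromBlocks A 0 0 D with hN₀def
  set G₀ : Matrix (Fin m ⊕ Fin n) (Fin m ⊕ Fin n) ℝ := Matrix.fromBlocks A⁻¹ 0 0 D⁻¹ with hG₀def
  have hN₀G₀ : N₀ * G₀ = 1 := by
    rw [hN₀def, hG₀def, Matrix.fromBlocks_multiply]
    simp only [Matrix.mul_zero, Matrix.zero_mul, add_zero, zero_add,
      Matrix.mul_nonsing_inv A hAd, Matrix.mul_nonsing_inv D hDd]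
    exact Matrix.fromBlocks_one
  have hG₀N₀ : G₀ * N₀ = 1 := by
    rw [hN₀def, hG₀def, Matrix.fromBlocks_multiply]
    simp only [Matrix.mul_zero, Matrix.zero_mul, add_zero, zero_add,
      Matrix.nonsing_inv_mul A hAd, Matrix.nonsing_inv_mul D hDd]
    exact Matrix.fromBlocks_one
  have hG11 : G₀.toBlocks₁₁ = A⁻¹ := by rw [hG₀def]; exact Matrix.toBlocks_fromBlocks₁₁ _ _ _ _
  have hG12 : G₀.toBlocks₁₂ = 0 := by rw [hG₀def]; exact Matrix.toBlocks_fromBlocks₁₂ _ _ _ _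
  have hG21 : G₀.toBlocks₂₁ = 0 := by rw [hG₀def]; exact Matrix.toBlocks_fromBlocks₂₁ _ _ _ _
  have hG22 : G₀.toBlocks₂₂ = D⁻¹ := by rw [hG₀def]; exact Matrix.toBlocks_fromBlocks₂₂ _ _ _ _
  set ΔN : ℝ → Matrix (Fin m ⊕ Fin n) (Fin m ⊕ Fin n) ℝ :=
    fun t => Matrix.fromBlocks (P t) (Real.exp (t/2) • Q t) (Real.exp (t/2) • R t) (S t)
    with hΔdef
  set N : ℝ → Matrix (Fin m ⊕ Fin n) (Fin m ⊕ Fin n) ℝ :=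
    fun t => Matrix.fromBlocks (A + P t) (Real.exp (t/2) • Q t) (Real.exp (t/2) • R t) (D + S t)
    with hNdef
  have hNsub : ∀ t, N t - N₀ = ΔN t := by
    intro t
    simp only [hNdef, hΔdef, hN₀def, fromBlocks_sub, add_sub_cancel_left, sub_zero]
  -- scaled norm bounds
  have hQ' : ∀ t ≥ (0:ℝ), ‖Real.exp (t/2) • Q t‖ ≤ C₀ * Real.exp (-(t/2)) := by
    intro t ht
    rw [norm_smul, Real.norm_eq_abs, abs_of_pos (Real.exp_pos _)]
    calc Real.exp (t/2) * ‖Q t‖ ≤ Real.exp (t/2) * (C₀ * Real.exp (-t)) :=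
          mul_le_mul_of_nonneg_left (hQ t ht) (Real.exp_pos _).le
      _ = C₀ * (Real.exp (-t) * Real.exp (t/2)) := by ring
      _ = C₀ * Real.exp (-(t/2)) := by
          rw [← Real.exp_add, show (-t) + t/2 = -(t/2) by ring]
  have hR' : ∀ t ≥ (0:ℝ), ‖Real.exp (t/2) • R t‖ ≤ C₀ * Real.exp (-(t/2)) := by
    intro t ht
    rw [norm_smul, Real.norm_eq_abs, abs_of_pos (Real.exp_pos _)]
    calc Real.exp (t/2) * ‖R t‖ ≤ Real.exp (t/2) * (C₀ * Real.exp (-t)) :=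
          mul_le_mul_of_nonneg_left (hR t ht) (Real.exp_pos _).le
      _ = C₀ * (Real.exp (-t) * Real.exp (t/2)) := by ring
      _ = C₀ * Real.exp (-(t/2)) := by
          rw [← Real.exp_add, show (-t) + t/2 = -(t/2) by ring]
  have hS' : ∀ t ≥ (0:ℝ), ‖S t‖ ≤ C₀ * Real.exp (-(t/2)) := by
    intro t ht
    refine le_trans (hS t ht) (mul_le_mul_of_nonneg_left ?_ hC₀.le)
    exact Real.exp_le_exp.mpr (by linarith)
  have hΔnorm : ∀ t ≥ (0:ℝ), ‖ΔN t‖ ≤ ‖P t‖ + 3 * (C₀ * Real.exp (-(t/2))) := by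
    intro t ht
    simp only [hΔdef]
    refine le_trans (norm_fromBlocks_le _ _ _ _) ?_
    have h1 := hQ' t ht; have h2 := hR' t ht; have h3 := hS' t ht
    linarith
  have hexp2 : Tendsto (fun t : ℝ => Real.exp (-(t/2))) atTop (nhds 0) := by
    have h : Tendsto (fun t : ℝ => t/2) atTop atTop :=
      tendsto_id.atTop_div_const (by norm_num)
    exact Real.tendsto_exp_neg_atTop_nhds_zero.comp h
  have hΔtend : Tendsto (fun t => ‖ΔN t‖) atTop (nhds 0) := by
    have hbound : ∀ᶠ t in atTop, ‖ΔN t‖ ≤ ‖P t‖ + 3 * (C₀ * Real.exp (-(t/2))) :=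
      (eventually_ge_atTop (0:ℝ)).mono hΔnorm
    have hg : Tendsto (fun t => ‖P t‖ + 3 * (C₀ * Real.exp (-(t/2)))) atTop (nhds 0) := by
      have := hP.add ((hexp2.const_mul C₀).const_mul 3)
      simpa using this
    exact tendsto_of_tendsto_of_tendsto_of_le_of_le' tendsto_const_nhds hg
      (Eventually.of_forall fun t => norm_nonneg _) hbound
  have hNtend : Tendsto N atTop (nhds N₀) := by
    refine tendsto_iff_norm_sub_tendsto_zero.mpr ?_
    simpa only [hNsub] using hΔtend
  have hN₀unit : IsUnit N₀ :=
    (Matrix.isUnit_iff_isUnit_det N₀).mpr (Matrix.isUnit_det_of_right_inverse hN₀G₀)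
  have hUnitN : ∀ᶠ t in atTop, IsUnit (N t) :=
    hNtend.eventually (Units.isOpen.mem_nhds hN₀unit)
  have hsm1 : ∀ᶠ t in atTop, ‖G₀‖ * ‖ΔN t‖ ≤ 1/2 := by
    have h : Tendsto (fun t => ‖G₀‖ * ‖ΔN t‖) atTop (nhds 0) := by
      simpa using hΔtend.const_mul ‖G₀‖
    exact h.eventually_le_const (by norm_num)
  have hsm2 : ∀ᶠ t in atTop, ‖A⁻¹‖ * ‖P t‖ ≤ 1/2 := by
    have h : Tendsto (fun t => ‖A⁻¹‖ * ‖P t‖) atTop (nhds 0) := by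
      simpa using hP.const_mul ‖A⁻¹‖
    exact h.eventually_le_const (by norm_num)
  obtain ⟨T₀, hT₀⟩ := eventually_atTop.mp ((hUnitN.and hsm1).and hsm2)
  set T := max T₀ 0 with hTdef
  have hT0 : (0:ℝ) ≤ T := le_max_right _ _
  set C₁ : ℝ := 2 * ‖A⁻¹‖ * C₀ * (2 * ‖G₀‖) with hC₁def
  set C₂ : ℝ := ‖D⁻¹‖ * C₀ * (C₁ + 2 * ‖G₀‖) + 1 with hC₂def
  have master : ∀ t ≥ T, IsUnit (M t) ∧
      ‖Matrix.toBlocks₁₁ (M t)⁻¹ - A⁻¹‖ ≤ ‖G₀‖ * ‖ΔN t‖ * (2 * ‖G₀‖) ∧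
      ‖Matrix.toBlocks₁₂ (M t)⁻¹‖ + ‖Matrix.toBlocks₂₁ (M t)⁻¹‖ ≤ C₁ + C₁ ∧
      ‖Real.exp (-t) • Matrix.toBlocks₂₂ (M t)⁻¹ - D⁻¹‖ ≤ C₂ * Real.exp (-t) := by
    intro t ht
    have ht0 : (0:ℝ) ≤ t := le_trans hT0 ht
    obtain ⟨⟨hu, h1⟩, h2⟩ := hT₀ t (le_trans (le_max_left _ _) ht)
    have hNdet : IsUnit (N t).det := (Matrix.isUnit_iff_isUnit_det _).mp hu
    set K := (N t)⁻¹ with hKdef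
    have hNK : N t * K = 1 := Matrix.mul_nonsing_inv _ hNdet
    have hKN : K * N t = 1 := Matrix.nonsing_inv_mul _ hNdet
    have hN₀eq : N₀ = N t - ΔN t := by rw [← hNsub t, sub_sub_cancel]
    have hK1 : K = G₀ - G₀ * (ΔN t * K) := by
      have h3 : N₀ * K = 1 - ΔN t * K := by rw [hN₀eq, Matrix.sub_mul, hNK]
      calc K = G₀ * N₀ * K := by rw [hG₀N₀, one_mul]
        _ = G₀ * (N₀ * K) := by rw [mul_assoc]
        _ = G₀ * (1 - ΔN t * K) := by rw [h3]
        _ = G₀ - G₀ * (ΔN t * K) := by rw [Matrix.mul_sub, mul_one]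
    have hK2 : K = G₀ - K * ΔN t * G₀ := by
      have h3 : K * N₀ = 1 - K * ΔN t := by rw [hN₀eq, Matrix.mul_sub, hKN]
      calc K = K * (N₀ * G₀) := by rw [hN₀G₀, mul_one]
        _ = K * N₀ * G₀ := by rw [mul_assoc]
        _ = (1 - K * ΔN t) * G₀ := by rw [h3]
        _ = G₀ - K * ΔN t * G₀ := by rw [Matrix.sub_mul, one_mul]
    have hKd : ‖K - G₀‖ ≤ ‖G₀‖ * ‖ΔN t‖ * ‖K‖ := by
      have heq : K - G₀ = -(G₀ * (ΔN t * K)) := by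
        conv_lhs => rw [hK1]
        abel
      rw [heq, norm_neg]
      calc ‖G₀ * (ΔN t * K)‖ ≤ ‖G₀‖ * ‖ΔN t * K‖ := Matrix.linfty_opNorm_mul _ _
        _ ≤ ‖G₀‖ * (‖ΔN t‖ * ‖K‖) :=
            mul_le_mul_of_nonneg_left (Matrix.linfty_opNorm_mul _ _) (norm_nonneg _)
        _ = ‖G₀‖ * ‖ΔN t‖ * ‖K‖ := by ring
    have hKB : ‖K‖ ≤ 2 * ‖G₀‖ := by
      have h4 : ‖K‖ - ‖G₀‖ ≤ ‖K - G₀‖ := norm_sub_norm_le K G₀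
      have h5 : ‖G₀‖ * ‖ΔN t‖ * ‖K‖ ≤ 1/2 * ‖K‖ :=
        mul_le_mul_of_nonneg_right h1 (norm_nonneg _)
      linarith
    have hKG : ‖K - G₀‖ ≤ ‖G₀‖ * ‖ΔN t‖ * (2 * ‖G₀‖) :=
      le_trans hKd (mul_le_mul_of_nonneg_left hKB (mul_nonneg (norm_nonneg _) (norm_nonneg _)))
    have hΔ11 : (ΔN t).toBlocks₁₁ = P t := by
      simp only [hΔdef, Matrix.toBlocks_fromBlocks₁₁]
    have hΔ12 : (ΔN t).toBlocks₁₂ = Real.exp (t/2) • Q t := by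
      simp only [hΔdef, Matrix.toBlocks_fromBlocks₁₂]
    have hΔ21 : (ΔN t).toBlocks₂₁ = Real.exp (t/2) • R t := by
      simp only [hΔdef, Matrix.toBlocks_fromBlocks₂₁]
    have hΔ22 : (ΔN t).toBlocks₂₂ = S t := by
      simp only [hΔdef, Matrix.toBlocks_fromBlocks₂₂]
    have hQb : ‖Real.exp (t/2) • Q t‖ ≤ C₀ * Real.exp (-(t/2)) := hQ' t ht0
    have hRb : ‖Real.exp (t/2) • R t‖ ≤ C₀ * Real.exp (-(t/2)) := hR' t ht0
    have hK22B : ‖K.toBlocks₂₂‖ ≤ 2 * ‖G₀‖ := le_trans (norm_toBlocks₂₂_le K) hKB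
    -- block ₁₂ estimate
    have hK12eq : K.toBlocks₁₂ =
        -(A⁻¹ * (P t * K.toBlocks₁₂ + (Real.exp (t/2) • Q t) * K.toBlocks₂₂)) := by
      conv_lhs => rw [hK1]
      rw [toBlocks₁₂_sub, hG12, toBlocks₁₂_mul, hG11, hG12, toBlocks₁₂_mul, hΔ11, hΔ12]
      simp
    have hK12n : ‖K.toBlocks₁₂‖ ≤ C₁ * Real.exp (-(t/2)) := by
      have hx : ‖K.toBlocks₁₂‖ ≤
          ‖A⁻¹‖ * (‖P t‖ * ‖K.toBlocks₁₂‖ + C₀ * Real.exp (-(t/2)) * (2 * ‖G₀‖)) := by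
        conv_lhs => rw [hK12eq]
        rw [norm_neg]
        refine le_trans (Matrix.linfty_opNorm_mul _ _)
          (mul_le_mul_of_nonneg_left ?_ (norm_nonneg _))
        refine le_trans (norm_add_le _ _) (add_le_add ?_ ?_)
        · exact Matrix.linfty_opNorm_mul _ _
        · exact le_trans (Matrix.linfty_opNorm_mul _ _)
            (mul_le_mul hQb hK22B (norm_nonneg _) (by positivity))
      have h2' : ‖A⁻¹‖ * ‖P t‖ * ‖K.toBlocks₁₂‖ ≤ 1/2 * ‖K.toBlocks₁₂‖ :=
        mul_le_mul_of_nonneg_right h2 (norm_nonneg _)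
      have hexpand : ‖A⁻¹‖ * (‖P t‖ * ‖K.toBlocks₁₂‖ + C₀ * Real.exp (-(t/2)) * (2 * ‖G₀‖))
          = ‖A⁻¹‖ * ‖P t‖ * ‖K.toBlocks₁₂‖
            + ‖A⁻¹‖ * (C₀ * Real.exp (-(t/2)) * (2 * ‖G₀‖)) := by ring
      have hC₁e : C₁ * Real.exp (-(t/2))
          = 2 * (‖A⁻¹‖ * (C₀ * Real.exp (-(t/2)) * (2 * ‖G₀‖))) := by
        rw [hC₁def]; ring
      linarith
    -- block ₂₁ estimate
    have hK21eq : K.toBlocks₂₁ =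
        -((K.toBlocks₂₁ * P t + K.toBlocks₂₂ * (Real.exp (t/2) • R t)) * A⁻¹) := by
      conv_lhs => rw [hK2]
      rw [toBlocks₂₁_sub, hG21, toBlocks₂₁_mul, hG11, hG21, toBlocks₂₁_mul, hΔ11, hΔ21]
      simp
    have hK21n : ‖K.toBlocks₂₁‖ ≤ C₁ * Real.exp (-(t/2)) := by
      have hx : ‖K.toBlocks₂₁‖ ≤
          (‖K.toBlocks₂₁‖ * ‖P t‖ + 2 * ‖G₀‖ * (C₀ * Real.exp (-(t/2)))) * ‖A⁻¹‖ := by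
        conv_lhs => rw [hK21eq]
        rw [norm_neg]
        refine le_trans (Matrix.linfty_opNorm_mul _ _)
          (mul_le_mul_of_nonneg_right ?_ (norm_nonneg _))
        refine le_trans (norm_add_le _ _) (add_le_add ?_ ?_)
        · exact Matrix.linfty_opNorm_mul _ _
        · exact le_trans (Matrix.linfty_opNorm_mul _ _)
            (mul_le_mul hK22B hRb (norm_nonneg _) (by positivity))
      have h2' : ‖A⁻¹‖ * ‖P t‖ * ‖K.toBlocks₂₁‖ ≤ 1/2 * ‖K.toBlocks₂₁‖ :=
        mul_le_mul_of_nonneg_right h2 (norm_nonneg _)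
      have hexpand : (‖K.toBlocks₂₁‖ * ‖P t‖ + 2 * ‖G₀‖ * (C₀ * Real.exp (-(t/2)))) * ‖A⁻¹‖
          = ‖A⁻¹‖ * ‖P t‖ * ‖K.toBlocks₂₁‖
            + ‖A⁻¹‖ * (C₀ * Real.exp (-(t/2)) * (2 * ‖G₀‖)) := by ring
      have hC₁e : C₁ * Real.exp (-(t/2))
          = 2 * (‖A⁻¹‖ * (C₀ * Real.exp (-(t/2)) * (2 * ‖G₀‖))) := by
        rw [hC₁def]; ring
      linarith
    -- block ₂₂ estimate
    have hee : Real.exp (-(t/2)) * Real.exp (-(t/2)) = Real.exp (-t) := by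
      rw [← Real.exp_add, show -(t/2) + -(t/2) = -t by ring]
    have hK22eq : K.toBlocks₂₂ - D⁻¹ =
        -(D⁻¹ * ((Real.exp (t/2) • R t) * K.toBlocks₁₂ + S t * K.toBlocks₂₂)) := by
      conv_lhs => rw [hK1]
      rw [toBlocks₂₂_sub, toBlocks₂₂_mul, hG21, hG22, toBlocks₂₂_mul, hΔ21, hΔ22]
      simp only [Matrix.zero_mul, zero_add]
      abel
    have hK22n : ‖K.toBlocks₂₂ - D⁻¹‖ ≤ C₂ * Real.exp (-t) := by
      have hx : ‖K.toBlocks₂₂ - D⁻¹‖ ≤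
          ‖D⁻¹‖ * (C₀ * Real.exp (-(t/2)) * (C₁ * Real.exp (-(t/2)))
            + C₀ * Real.exp (-t) * (2 * ‖G₀‖)) := by
        rw [hK22eq, norm_neg]
        refine le_trans (Matrix.linfty_opNorm_mul _ _)
          (mul_le_mul_of_nonneg_left ?_ (norm_nonneg _))
        refine le_trans (norm_add_le _ _) (add_le_add ?_ ?_)
        · exact le_trans (Matrix.linfty_opNorm_mul _ _)
            (mul_le_mul hRb hK12n (norm_nonneg _) (by positivity))
        · exact le_trans (Matrix.linfty_opNorm_mul _ _)
            (mul_le_mul (hS t ht0) hK22B (norm_nonneg _) (by positivity))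
      have hform : ‖D⁻¹‖ * (C₀ * Real.exp (-(t/2)) * (C₁ * Real.exp (-(t/2)))
            + C₀ * Real.exp (-t) * (2 * ‖G₀‖))
          = (‖D⁻¹‖ * C₀ * (C₁ + 2 * ‖G₀‖)) * Real.exp (-t) := by
        rw [← hee]; ring
      rw [hform] at hx
      refine le_trans hx ?_
      have he : (0:ℝ) ≤ Real.exp (-t) := (Real.exp_pos _).le
      rw [hC₂def]
      nlinarith
    -- factorization of M t and its inverse
    set Ft : Matrix (Fin m ⊕ Fin n) (Fin m ⊕ Fin n) ℝ :=
      Matrix.fromBlocks 1 0 0 (Real.exp (-(t/2)) • (1 : Matrix (Fin n) (Fin n) ℝ)) with hFt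
    set Gt : Matrix (Fin m ⊕ Fin n) (Fin m ⊕ Fin n) ℝ :=
      Matrix.fromBlocks 1 0 0 (Real.exp (t/2) • (1 : Matrix (Fin n) (Fin n) ℝ)) with hGt
    have hem : Real.exp (-(t/2)) * Real.exp (t/2) = 1 := by
      rw [← Real.exp_add]; simp
    have hem' : Real.exp (t/2) * Real.exp (-(t/2)) = 1 := by
      rw [← Real.exp_add]; simp
    have hee3 : Real.exp (t/2) * Real.exp (t/2) = Real.exp t := by
      rw [← Real.exp_add, show t/2 + t/2 = t by ring]
    have hFG : Ft * Gt = 1 := by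
      rw [hFt, hGt, Matrix.fromBlocks_multiply]
      simp [Matrix.smul_mul, Matrix.mul_smul, smul_smul, hem, hem', Matrix.fromBlocks_one]
    have hMfact : M t = Ft * (N t * Ft) := by
      rw [hM t]
      simp only [hNdef, hFt]
      rw [Matrix.fromBlocks_multiply, Matrix.fromBlocks_multiply]
      simp [Matrix.smul_mul, Matrix.mul_smul, smul_smul, hem, hem', hee]
    have hW : Gt * (K * Gt) = Matrix.fromBlocks K.toBlocks₁₁ (Real.exp (t/2) • K.toBlocks₁₂)
        (Real.exp (t/2) • K.toBlocks₂₁) (Real.exp t • K.toBlocks₂₂) := by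
      conv_lhs => rw [← Matrix.fromBlocks_toBlocks K]
      rw [hGt, Matrix.fromBlocks_multiply, Matrix.fromBlocks_multiply]
      simp [Matrix.smul_mul, Matrix.mul_smul, smul_smul, hee3]
    have hMW : M t * (Gt * (K * Gt)) = 1 := by
      rw [hMfact]
      calc Ft * (N t * Ft) * (Gt * (K * Gt))
          = Ft * (N t * (Ft * (Gt * (K * Gt)))) := by rw [mul_assoc, mul_assoc]
        _ = Ft * (N t * (K * Gt)) := by rw [← mul_assoc Ft Gt (K * Gt), hFG, one_mul]
        _ = Ft * (N t * K * Gt) := by rw [← mul_assoc (N t) K Gt]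
        _ = Ft * Gt := by rw [hNK, one_mul]
        _ = 1 := hFG
    have hMunit : IsUnit (M t) :=
      (Matrix.isUnit_iff_isUnit_det _).mpr (Matrix.isUnit_det_of_right_inverse hMW)
    have hMinv : (M t)⁻¹ = Matrix.fromBlocks K.toBlocks₁₁ (Real.exp (t/2) • K.toBlocks₁₂)
        (Real.exp (t/2) • K.toBlocks₂₁) (Real.exp t • K.toBlocks₂₂) := by
      rw [Matrix.inv_eq_right_inv hMW, hW]
    refine ⟨hMunit, ?_, ?_, ?_⟩
    · rw [hMinv, Matrix.toBlocks_fromBlocks₁₁]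
      have heq : K.toBlocks₁₁ - A⁻¹ = (K - G₀).toBlocks₁₁ := by
        rw [toBlocks₁₁_sub, hG11]
      rw [heq]
      exact le_trans (norm_toBlocks₁₁_le _) hKG
    · rw [hMinv, Matrix.toBlocks_fromBlocks₁₂, Matrix.toBlocks_fromBlocks₂₁]
      rw [norm_smul, norm_smul, Real.norm_eq_abs, abs_of_pos (Real.exp_pos _)]
      have h12 : Real.exp (t/2) * ‖K.toBlocks₁₂‖
          ≤ Real.exp (t/2) * (C₁ * Real.exp (-(t/2))) :=
        mul_le_mul_of_nonneg_left hK12n (Real.exp_pos _).le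
      have h21 : Real.exp (t/2) * ‖K.toBlocks₂₁‖
          ≤ Real.exp (t/2) * (C₁ * Real.exp (-(t/2))) :=
        mul_le_mul_of_nonneg_left hK21n (Real.exp_pos _).le
      have hcal : Real.exp (t/2) * (C₁ * Real.exp (-(t/2))) = C₁ := by
        rw [mul_comm C₁ _, ← mul_assoc, hem', one_mul]
      linarith
    · rw [hMinv, Matrix.toBlocks_fromBlocks₂₂, smul_smul]
      rw [show Real.exp (-t) * Real.exp t = 1 by rw [← Real.exp_add]; simp, one_smul]
      exact hK22n
  refine ⟨T, hT0, fun t ht => (master t ht).1, ?_, ⟨C₁ + C₁, fun t ht => (master t ht).2.2.1⟩,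
    C₂, ?_, fun t ht => (master t ht).2.2.2⟩
  · have hg : Tendsto (fun t => ‖G₀‖ * ‖ΔN t‖ * (2 * ‖G₀‖)) atTop (nhds 0) := by
      simpa using (hΔtend.const_mul ‖G₀‖).mul_const (2 * ‖G₀‖)
    refine tendsto_of_tendsto_of_tendsto_of_le_of_le' tendsto_const_nhds hg
      (Eventually.of_forall fun t => norm_nonneg _) ?_
    exact (eventually_ge_atTop T).mono fun t ht => (master t ht).2.1
  · rw [hC₂def, hC₁def]; positivity
end

section
/- Uniform bound for the doubly-contracted Ricci tensor in base/fiber blocks (the linear-algebra content of the estimate |S|_{g_X} ≤ C, equation (4.33), in the proof of Theorem 1.2): Let m, n ≥ 1 be integers and C₀ > 0. For each t ≥ 0 let H(t), R(t), J(t) be (m+n)×(m+n) real matrices, written in blocks with the first m rows/columns labelled b (base) and the last n labelled f (fiber), satisfying: H(t) is symmetric with ‖H_{bb}(t)‖ ≤ C₀, ‖H_{bf}(t)‖ ≤ C₀ and ‖H_{ff}(t)‖ ≤ C₀e^{t}; ‖R_{bb}(t)‖ ≤ C₀, ‖R_{bf}(t)‖ ≤ C₀e^{−3t/2}, ‖R_{fb}(t)‖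 ≤ C₀e^{−3t/2} and ‖R_{ff}(t)‖ ≤ C₀e^{−2t}; and J_{bf}(t) = 0 with ‖J_{bb}(t)‖ ≤ C₀, ‖J_{ff}(t)‖ ≤ C₀ and ‖J_{fb}(t)‖ ≤ C₀e^{t/2}. Then there exists C > 0, depending only on m, n, C₀, such that ‖H(t)·R(t)·J(t)·H(t)‖ ≤ C for all t ≥ 0. -/
open Real Matrix

attribute [local instance] Matrix.linftyOpNormedAddCommGroup Matrix.linftyOpNormedRing

section Aux

variable {α β : Type*} [Fintype α] [Fintype β]

/-- entrywise bound from the `L∞` operator norm -/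
lemma aux_entry_abs_le_norm (A : Matrix α β ℝ) (i : α) (j : β) : |A i j| ≤ ‖A‖ := by
  rw [← Real.norm_eq_abs, ← coe_nnnorm, ← coe_nnnorm, NNReal.coe_le_coe,
    Matrix.linfty_opNNNorm_def]
  have h2 : (fun i => ∑ j : β, ‖A i j‖₊) i ≤ Finset.univ.sup (fun i => ∑ j : β, ‖A i j‖₊) :=
    Finset.le_sup (f := fun i => ∑ j : β, ‖A i j‖₊) (Finset.mem_univ i)
  exact le_trans (Finset.single_le_sum (f := fun j => ‖A i j‖₊)
    (fun _ _ => zero_le) (Finset.mem_univ j)) h2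

/-- `L∞` operator norm bound from entrywise bound -/
lemma aux_norm_le_card_mul (A : Matrix α β ℝ) {c : ℝ} (hc : 0 ≤ c)
    (h : ∀ i j, |A i j| ≤ c) : ‖A‖ ≤ (Fintype.card β : ℝ) * c := by
  rw [Matrix.linfty_opNorm_def]
  have step : ∀ i j, ‖A i j‖₊ ≤ Real.toNNReal c := by
    intro i j
    have : ‖A i j‖ ≤ c := by rw [Real.norm_eq_abs]; exact h i j
    rw [← NNReal.coe_le_coe, coe_nnnorm, Real.coe_toNNReal _ hc]; exact this
  have hsup : (Finset.univ.sup fun i : α => ∑ j : β, ‖A i j‖₊)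
      ≤ Fintype.card β • Real.toNNReal c := by
    refine Finset.sup_le fun i _ => ?_
    simpa using Finset.sum_le_card_nsmul Finset.univ (fun j => ‖A i j‖₊) _
      (fun j _ => step i j)
  calc ((Finset.univ.sup fun i : α => ∑ j : β, ‖A i j‖₊ : NNReal) : ℝ)
      ≤ ((Fintype.card β • Real.toNNReal c : NNReal) : ℝ) := NNReal.coe_le_coe.2 hsup
    _ = (Fintype.card β : ℝ) * c := by
        simp [NNReal.coe_nsmul, Real.coe_toNNReal _ hc]

/-- weight for `H` -/
noncomputable def wH (i j : α ⊕ β) : ℝ := if i.isRight ∧ j.isRight then 1 else 0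

/-- weight for `R` -/
noncomputable def wR (i j : α ⊕ β) : ℝ :=
  if i.isRight ∧ j.isRight then -2 else if i.isRight ∨ j.isRight then -(3/2) else 0

/-- weight for `J` -/
noncomputable def wJ (i j : α ⊕ β) : ℝ :=
  if i.isRight then (if j.isRight then 0 else 1/2) else (if j.isRight then -1 else 0)

omit [Fintype α] [Fintype β] in
lemma wsum_nonpos (i j k p l : α ⊕ β) :
    wH i j + wR j k + wJ k p + wH p l ≤ 0 := by
  rcases i with i | i <;> rcases j with j | j <;> rcases k with k | k <;>
    rcases p with p | p <;> rcases l with l | l <;>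
    simp [wH, wR, wJ] <;> norm_num

end Aux

/-- product of four numbers bounded by exponentials with nonpositive total weight -/
lemma aux_prod4_le {x1 x2 x3 x4 c a1 a2 a3 a4 t : ℝ} (hc : 0 < c) (ht : 0 ≤ t)
    (h1 : |x1| ≤ c * Real.exp (a1 * t)) (h2 : |x2| ≤ c * Real.exp (a2 * t))
    (h3 : |x3| ≤ c * Real.exp (a3 * t)) (h4 : |x4| ≤ c * Real.exp (a4 * t))
    (hsum : a1 + a2 + a3 + a4 ≤ 0) : |x1 * x2 * x3 * x4| ≤ c ^ 4 := by
  have hexp : Real.exp (a1 * t) * Real.exp (a2 * t) * Real.exp (a3 * t) * Real.exp (a4 * t)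
      = Real.exp ((a1 + a2 + a3 + a4) * t) := by
    rw [← Real.exp_add, ← Real.exp_add, ← Real.exp_add]; ring_nf
  have hle1 : Real.exp ((a1 + a2 + a3 + a4) * t) ≤ 1 :=
    Real.exp_le_one_iff.2 (mul_nonpos_iff.2 (Or.inr ⟨hsum, ht⟩))
  calc |x1 * x2 * x3 * x4| = |x1| * |x2| * |x3| * |x4| := by
        rw [abs_mul, abs_mul, abs_mul]
    _ ≤ (c * Real.exp (a1 * t)) * (c * Real.exp (a2 * t)) * (c * Real.exp (a3 * t)) *
        (c * Real.exp (a4 * t)) := by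
        gcongr
    _ = c ^ 4 * (Real.exp (a1 * t) * Real.exp (a2 * t) * Real.exp (a3 * t) *
        Real.exp (a4 * t)) := by ring
    _ = c ^ 4 * Real.exp ((a1 + a2 + a3 + a4) * t) := by rw [hexp]
    _ ≤ c ^ 4 * 1 := mul_le_mul_of_nonneg_left hle1 (by positivity)
    _ = c ^ 4 := mul_one _

/-- Uniform bound for the doubly-contracted Ricci tensor in base/fiber blocks:
the linear-algebra content of the estimate `|S|_{g_X} ≤ C` (equation (4.33)) in the
proof of Theorem 1.2 of the paper. The blocks `toBlocks₁₁, toBlocks₁₂, toBlocks₂₁,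
toBlocks₂₂` correspond to `bb, bf, fb, ff` respectively; the constant `C` depends
only on `m`, `n`, `C₀`. -/
theorem contracted_ricci_uniform_bound
    (m n : ℕ) (hm : 1 ≤ m) (hn : 1 ≤ n) (C₀ : ℝ) (hC₀ : 0 < C₀) :
    ∃ C > 0, ∀ H R J : ℝ → Matrix (Fin m ⊕ Fin n) (Fin m ⊕ Fin n) ℝ,
      (∀ t ≥ (0 : ℝ), (H t).IsSymm) →
      (∀ t ≥ (0 : ℝ), ‖Matrix.toBlocks₁₁ (H t)‖ ≤ C₀) →
      (∀ t ≥ (0 : ℝ), ‖Matrix.toBlocks₁₂ (H t)‖ ≤ C₀) →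
      (∀ t ≥ (0 : ℝ), ‖Matrix.toBlocks₂₂ (H t)‖ ≤ C₀ * Real.exp t) →
      (∀ t ≥ (0 : ℝ), ‖Matrix.toBlocks₁₁ (R t)‖ ≤ C₀) →
      (∀ t ≥ (0 : ℝ), ‖Matrix.toBlocks₁₂ (R t)‖ ≤ C₀ * Real.exp (-(3 * t / 2))) →
      (∀ t ≥ (0 : ℝ), ‖Matrix.toBlocks₂₁ (R t)‖ ≤ C₀ * Real.exp (-(3 * t / 2))) →
      (∀ t ≥ (0 : ℝ), ‖Matrix.toBlocks₂₂ (R t)‖ ≤ C₀ * Real.exp (-(2 * t))) →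
      (∀ t ≥ (0 : ℝ), Matrix.toBlocks₁₂ (J t) = 0) →
      (∀ t ≥ (0 : ℝ), ‖Matrix.toBlocks₁₁ (J t)‖ ≤ C₀) →
      (∀ t ≥ (0 : ℝ), ‖Matrix.toBlocks₂₂ (J t)‖ ≤ C₀) →
      (∀ t ≥ (0 : ℝ), ‖Matrix.toBlocks₂₁ (J t)‖ ≤ C₀ * Real.exp (t / 2)) →
      ∀ t ≥ (0 : ℝ), ‖H t * R t * J t * H t‖ ≤ C := by
  refine ⟨((m + n : ℕ) : ℝ) ^ 4 * C₀ ^ 4, by positivity, ?_⟩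
  intro H R J hsym hHbb hHbf hHff hRbb hRbf hRfb hRff hJbf hJbb hJff hJfb t ht
  -- entrywise bounds with exponential weights
  have hHe : ∀ i j, |H t i j| ≤ C₀ * Real.exp (wH i j * t) := by
    rintro (i | i) (j | j)
    · simpa [wH, Matrix.toBlocks₁₁] using (aux_entry_abs_le_norm ((H t).toBlocks₁₁) i j).trans (hHbb t ht)
    · simpa [wH, Matrix.toBlocks₁₂] using (aux_entry_abs_le_norm ((H t).toBlocks₁₂) i j).trans (hHbf t ht)
    · rw [show H t (Sum.inr i) (Sum.inl j) = H t (Sum.inl j) (Sum.inr i) from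
        (hsym t ht).apply _ _]
      simpa [wH, Matrix.toBlocks₁₂] using (aux_entry_abs_le_norm ((H t).toBlocks₁₂) j i).trans (hHbf t ht)
    · simpa [wH, Matrix.toBlocks₂₂] using (aux_entry_abs_le_norm ((H t).toBlocks₂₂) i j).trans (hHff t ht)
  have hRe : ∀ i j, |R t i j| ≤ C₀ * Real.exp (wR i j * t) := by
    rintro (i | i) (j | j)
    · simpa [wR, Matrix.toBlocks₁₁] using (aux_entry_abs_le_norm ((R t).toBlocks₁₁) i j).trans (hRbb t ht)
    · have := (aux_entry_abs_le_norm ((R t).toBlocks₁₂) i j).trans (hRbf t ht)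
      simpa [wR, Matrix.toBlocks₁₂, show -(3 * t / 2) = -(3/2) * t by ring] using this
    · have := (aux_entry_abs_le_norm ((R t).toBlocks₂₁) i j).trans (hRfb t ht)
      simpa [wR, Matrix.toBlocks₂₁, show -(3 * t / 2) = -(3/2) * t by ring] using this
    · have := (aux_entry_abs_le_norm ((R t).toBlocks₂₂) i j).trans (hRff t ht)
      simpa [wR, Matrix.toBlocks₂₂] using this
  have hJe : ∀ i j, |J t i j| ≤ C₀ * Real.exp (wJ i j * t) := by
    rintro (i | i) (j | j)
    · simpa [wJ, Matrix.toBlocks₁₁] using (aux_entry_abs_le_norm ((J t).toBlocks₁₁) i j).trans (hJbb t ht)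
    · have h0 : J t (Sum.inl i) (Sum.inr j) = 0 := by
        have := congrFun (congrFun (hJbf t ht) i) j
        simpa [Matrix.toBlocks₁₂] using this
      rw [h0, abs_zero]; positivity
    · have := (aux_entry_abs_le_norm ((J t).toBlocks₂₁) i j).trans (hJfb t ht)
      simpa [wJ, Matrix.toBlocks₂₁, show t / 2 = 1/2 * t by ring] using this
    · simpa [wJ, Matrix.toBlocks₂₂] using (aux_entry_abs_le_norm ((J t).toBlocks₂₂) i j).trans (hJff t ht)
  -- bound each entry of the product
  have key : ∀ i l, |(H t * R t * J t * H t) i l| ≤ ((m + n : ℕ) : ℝ) ^ 3 * C₀ ^ 4 := by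
    intro i l
    have expand : (H t * R t * J t * H t) i l
        = ∑ p, ∑ j, ∑ k, H t i j * R t j k * J t k p * H t p l := by
      simp only [Matrix.mul_apply, Finset.sum_mul, Finset.mul_sum, mul_assoc]
    rw [expand]
    have term : ∀ j k p, |H t i j * R t j k * J t k p * H t p l| ≤ C₀ ^ 4 := fun j k p =>
      aux_prod4_le hC₀ ht (hHe i j) (hRe j k) (hJe k p) (hHe p l) (wsum_nonpos i j k p l)
    calc |∑ p, ∑ j, ∑ k, H t i j * R t j k * J t k p * H t p l|
        ≤ ∑ p, ∑ j, ∑ k, |H t i j * R t j k * J t k p * H t p l| := by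
          refine (Finset.abs_sum_le_sum_abs _ _).trans (Finset.sum_le_sum fun p _ => ?_)
          refine (Finset.abs_sum_le_sum_abs _ _).trans (Finset.sum_le_sum fun k _ => ?_)
          exact Finset.abs_sum_le_sum_abs _ _
      _ ≤ ∑ _p : Fin m ⊕ Fin n, ∑ _k : Fin m ⊕ Fin n, ∑ _j : Fin m ⊕ Fin n, C₀ ^ 4 := by
          refine Finset.sum_le_sum fun p _ => Finset.sum_le_sum fun k _ =>
            Finset.sum_le_sum fun j _ => term k j p
      _ = ((m + n : ℕ) : ℝ) ^ 3 * C₀ ^ 4 := by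
          simp only [Finset.sum_const, Finset.card_univ, Fintype.card_sum,
            Fintype.card_fin, nsmul_eq_mul]
          push_cast
          ring
  have := aux_norm_le_card_mul (H t * R t * J t * H t)
    (by positivity) key
  calc ‖H t * R t * J t * H t‖
      ≤ (Fintype.card (Fin m ⊕ Fin n) : ℝ) * (((m + n : ℕ) : ℝ) ^ 3 * C₀ ^ 4) := this
    _ = ((m + n : ℕ) : ℝ) ^ 4 * C₀ ^ 4 := by
        simp [Fintype.card_sum]; ring
end
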